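/- arXiv:0704.1926 — 7 statements merged into one kernel-verified Lean document; each statement's English description precedes it below -/
import Mathlib

section
/- For an arbitrary complex sequence $z_0,\ldots,z_{n-1}$ with each $z_k$ not a nonpositive integer, $\det(\Gamma(z_k+j))_{j,k=0,\ldots,n-1}=\prod_{j=0}^{n-1}\Gamma(z_j)\prod_{0\leq j<k\leq n-1}(z_k-z_j)$. -/
open Finset

private lemma Gamma_nat_shift (z : ℂ) (hz : ∀ m : ℕ, z ≠ -(m : ℂ)) (m : ℕ) :
    Complex.Gamma (z + m) = Complex.Gamma z * (ascPochhammer ℂ m).eval z := by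
  induction m with
  | zero => simp
  | succ m ih =>
    have hne : z + m ≠ 0 := by
      intro h
      exact hz m (by linear_combination h)
    have : z + (m + 1 : ℕ) = (z + m) + 1 := by push_cast; ring
    rw [this, Complex.Gamma_add_one _ hne, ih, ascPochhammer_succ_eval]
    ring

/-- `det(Γ(z_k + j)) = ∏ Γ(z_j) · ∏_{j<k} (z_k - z_j)` for an arbitrary complex
sequence avoiding the poles of the Gamma function. -/
theorem det_gamma_shift (n : ℕ) (z : Fin n → ℂ)
    (hz : ∀ k, ∀ m : ℕ, z k ≠ -(m : ℂ)) :
    Matrix.det (Matrix.of fun j k : Fin n => Complex.Gamma (z k + (j : ℕ)))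
      = (∏ j, Complex.Gamma (z j)) * ∏ j, ∏ k ∈ Finset.Ioi j, (z k - z j) := by
  have h1 : Matrix.det (Matrix.of fun j k : Fin n => Complex.Gamma (z k + (j : ℕ)))
      = Matrix.det (Matrix.of fun k j : Fin n =>
          Complex.Gamma (z k) * (ascPochhammer ℂ (j : ℕ)).eval (z k)) := by
    rw [← Matrix.det_transpose]
    congr 1
    ext k j
    simpa using Gamma_nat_shift (z k) (hz k) j
  rw [h1, Matrix.det_mul_column (fun k => Complex.Gamma (z k))
    (fun k j : Fin n => (ascPochhammer ℂ (j:ℕ)).eval (z k))]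
  rw [show (Matrix.det fun k j : Fin n => (ascPochhammer ℂ (j:ℕ)).eval (z k)) =
      (Matrix.of fun k j : Fin n => (ascPochhammer ℂ (j:ℕ)).eval (z k)).det from rfl]
  rw [← Matrix.det_eval_matrixOfPolynomials_eq_det_vandermonde z
      (fun j => ascPochhammer ℂ (j : ℕ))
      (fun j => ascPochhammer_natDegree ℂ j)
      (fun j => monic_ascPochhammer _ _),
    Matrix.det_vandermonde]
end

section
/- With $I_\mu$ the modified Bessel function, the hard-edge spacing density for $a=0$ is $A_0(z)=\tfrac14 e^{-z/4}\big[I_2(\sqrt z)^2-I_1(\sqrt z)I_3(\sqrt z)\big]$, and it is nonnegative for all $z\geq 0$. -/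
open Finset

/-- The modified Bessel function of the first kind of integer order. -/
noncomputable def besselI (ν : ℕ) (x : ℝ) : ℝ :=
  ∑' k : ℕ, (x / 2) ^ (2 * k + ν) / ((Nat.factorial k : ℝ) * (Nat.factorial (k + ν) : ℝ))

namespace BesselAux

noncomputable def a (ν : ℕ) (x : ℝ) (k : ℕ) : ℝ :=
  (x / 2) ^ (2 * k + ν) / ((Nat.factorial k : ℝ) * (Nat.factorial (k + ν) : ℝ))

lemma besselI_eq (ν : ℕ) (x : ℝ) : besselI ν x = ∑' k, a ν x k := rfl

lemma a_nonneg (ν : ℕ) {x : ℝ} (hx : 0 ≤ x) (k : ℕ) : 0 ≤ a ν x k := by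
  unfold a
  positivity

lemma summable_a (ν : ℕ) {x : ℝ} (hx : 0 ≤ x) : Summable (a ν x) := by
  have ht : (0:ℝ) ≤ x / 2 := by linarith
  refine ((Real.summable_pow_div_factorial ((x / 2) ^ 2)).mul_left
    ((x / 2) ^ ν)).of_nonneg_of_le (a_nonneg ν hx) (fun k => ?_)
  unfold a
  have h2 : (x / 2) ^ (2 * k + ν) = (x / 2) ^ ν * ((x / 2) ^ 2) ^ k := by
    rw [← pow_mul, ← pow_add]
    ring_nf
  rw [h2, mul_div_assoc]
  have hfk : (1:ℝ) ≤ (Nat.factorial (k + ν) : ℝ) := by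
    exact_mod_cast Nat.one_le_iff_ne_zero.mpr (Nat.factorial_pos (k + ν)).ne'
  have hk0 : (0:ℝ) < (Nat.factorial k : ℝ) := Nat.cast_pos.mpr (Nat.factorial_pos k)
  refine mul_le_mul_of_nonneg_left ?_ (by positivity)
  apply div_le_div_of_nonneg_left (by positivity) hk0
  nlinarith

lemma summable_norm_a (ν : ℕ) {x : ℝ} (hx : 0 ≤ x) : Summable (fun k => ‖a ν x k‖) := by
  have := summable_a ν hx
  simpa [Real.norm_eq_abs, abs_of_nonneg (a_nonneg ν hx _)] using this

/-- Key combinatorial identity via Vandermonde. -/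
lemma key (μ ν n : ℕ) :
    ∑ k ∈ range (n + 1),
      (1 : ℝ) / (Nat.factorial k * Nat.factorial (k + μ) *
        Nat.factorial (n - k) * Nat.factorial (n - k + ν)) =
    (Nat.factorial (2 * n + μ + ν) : ℝ) /
      (Nat.factorial (n + μ + ν) * Nat.factorial n * Nat.factorial (n + μ) *
        Nat.factorial (n + ν)) := by
  have hstep : ∀ k ∈ range (n + 1),
      (1 : ℝ) / (Nat.factorial k * Nat.factorial (k + μ) *
        Nat.factorial (n - k) * Nat.factorial (n - k + ν)) =
      ((n + ν).choose k * (n + μ).choose (n - k) : ℝ) /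
        (Nat.factorial (n + μ) * Nat.factorial (n + ν)) := by
    intro k hk
    have hkn : k ≤ n := Nat.lt_succ_iff.mp (mem_range.mp hk)
    have h1 : ((n + ν).choose k : ℝ) =
        (Nat.factorial (n + ν) : ℝ) / (Nat.factorial k * Nat.factorial (n - k + ν)) := by
      rw [Nat.cast_choose ℝ (le_trans hkn (Nat.le_add_right n ν)),
        show n + ν - k = n - k + ν from by omega]
    have h2 : ((n + μ).choose (n - k) : ℝ) =
        (Nat.factorial (n + μ) : ℝ) / (Nat.factorial (n - k) * Nat.factorial (k + μ)) := by
      rw [Nat.cast_choose ℝ (le_trans (Nat.sub_le n k) (Nat.le_add_right n μ)),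
        show n + μ - (n - k) = k + μ from by omega]
    rw [h1, h2]
    have e1 : (Nat.factorial k : ℝ) ≠ 0 := Nat.cast_ne_zero.mpr (Nat.factorial_pos k).ne'
    have e2 : (Nat.factorial (k + μ) : ℝ) ≠ 0 := Nat.cast_ne_zero.mpr (Nat.factorial_pos _).ne'
    have e3 : (Nat.factorial (n - k) : ℝ) ≠ 0 := Nat.cast_ne_zero.mpr (Nat.factorial_pos _).ne'
    have e4 : (Nat.factorial (n - k + ν) : ℝ) ≠ 0 := Nat.cast_ne_zero.mpr (Nat.factorial_pos _).ne'
    have e5 : (Nat.factorial (n + μ) : ℝ) ≠ 0 := Nat.cast_ne_zero.mpr (Nat.factorial_pos _).ne'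
    have e6 : (Nat.factorial (n + ν) : ℝ) ≠ 0 := Nat.cast_ne_zero.mpr (Nat.factorial_pos _).ne'
    field_simp
  rw [Finset.sum_congr rfl hstep, ← Finset.sum_div]
  have hchoose : ∑ k ∈ range (n + 1),
      ((n + ν).choose k * (n + μ).choose (n - k) : ℝ) =
      ((2 * n + μ + ν).choose n : ℝ) := by
    have := Nat.add_choose_eq (n + ν) (n + μ) n
    have h2 : ((n + ν) + (n + μ)).choose n =
        ∑ k ∈ range (n + 1), (n + ν).choose k * (n + μ).choose (n - k) := by
      rw [this, Finset.Nat.sum_antidiagonal_eq_sum_range_succ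
        (fun i j => (n + ν).choose i * (n + μ).choose j)]
    have h3 : (n + ν) + (n + μ) = 2 * n + μ + ν := by ring
    rw [h3] at h2
    exact_mod_cast h2.symm
  rw [hchoose]
  rw [Nat.cast_choose ℝ (by omega : n ≤ 2 * n + μ + ν)]
  have h4 : 2 * n + μ + ν - n = n + μ + ν := by omega
  rw [h4]
  have e0 : (Nat.factorial (2 * n + μ + ν) : ℝ) ≠ 0 := Nat.cast_ne_zero.mpr (Nat.factorial_pos _).ne'
  have e1 : (Nat.factorial n : ℝ) ≠ 0 := Nat.cast_ne_zero.mpr (Nat.factorial_pos _).ne'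
  have e2 : (Nat.factorial (n + μ + ν) : ℝ) ≠ 0 := Nat.cast_ne_zero.mpr (Nat.factorial_pos _).ne'
  have e3 : (Nat.factorial (n + μ) : ℝ) ≠ 0 := Nat.cast_ne_zero.mpr (Nat.factorial_pos _).ne'
  have e4 : (Nat.factorial (n + ν) : ℝ) ≠ 0 := Nat.cast_ne_zero.mpr (Nat.factorial_pos _).ne'
  field_simp
  try exact Or.inl trivial
  try tauto

/-- The Cauchy-product diagonal sum in closed form. -/
lemma diag_sum (μ ν : ℕ) {x : ℝ} (hx : 0 ≤ x) (n : ℕ) :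
    ∑ k ∈ range (n + 1), a μ x k * a ν x (n - k) =
    (x / 2) ^ (2 * n + μ + ν) * ((Nat.factorial (2 * n + μ + ν) : ℝ) /
      (Nat.factorial (n + μ + ν) * Nat.factorial n * Nat.factorial (n + μ) *
        Nat.factorial (n + ν))) := by
  rw [← key μ ν n, Finset.mul_sum]
  refine Finset.sum_congr rfl (fun k hk => ?_)
  have hkn : k ≤ n := Nat.lt_succ_iff.mp (mem_range.mp hk)
  unfold a
  rw [div_mul_div_comm, ← pow_add]
  have hexp : 2 * k + μ + (2 * (n - k) + ν) = 2 * n + μ + ν := by omega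
  rw [hexp]
  ring

theorem turan {x : ℝ} (hx : 0 ≤ x) :
    besselI 1 x * besselI 3 x ≤ besselI 2 x ^ 2 := by
  rw [besselI_eq, besselI_eq, besselI_eq, sq]
  rw [tsum_mul_tsum_eq_tsum_sum_range_of_summable_norm (summable_norm_a 2 hx)
    (summable_norm_a 2 hx),
    tsum_mul_tsum_eq_tsum_sum_range_of_summable_norm (summable_norm_a 1 hx)
    (summable_norm_a 3 hx)]
  refine Summable.tsum_le_tsum (fun n => ?_)
    ((summable_norm_sum_mul_range_of_summable_norm (summable_norm_a 1 hx)
      (summable_norm_a 3 hx)).of_norm)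
    ((summable_norm_sum_mul_range_of_summable_norm (summable_norm_a 2 hx)
      (summable_norm_a 2 hx)).of_norm)
  rw [diag_sum 1 3 hx n, diag_sum 2 2 hx n]
  have h13 : 2 * n + 1 + 3 = 2 * n + 2 + 2 := by omega
  rw [h13]
  rw [show n + 2 + 2 = n + 4 from by omega, show n + 1 + 3 = n + 4 from by omega]
  have f2 : (Nat.factorial (n + 2) : ℝ) = (n + 2) * Nat.factorial (n + 1) := by
    exact_mod_cast Nat.factorial_succ (n + 1)
  have f3 : (Nat.factorial (n + 3) : ℝ) = (n + 3) * Nat.factorial (n + 2) := by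
    exact_mod_cast Nat.factorial_succ (n + 2)
  have hp1 : (0:ℝ) < (Nat.factorial (n + 1) : ℝ) := Nat.cast_pos.mpr (Nat.factorial_pos _)
  have hp4 : (0:ℝ) < (Nat.factorial (n + 4) : ℝ) := Nat.cast_pos.mpr (Nat.factorial_pos _)
  have hpn : (0:ℝ) < (Nat.factorial n : ℝ) := Nat.cast_pos.mpr (Nat.factorial_pos _)
  refine mul_le_mul_of_nonneg_left ?_ (by positivity)
  apply div_le_div_of_nonneg_left (by positivity) (by positivity)
  rw [f3, f2]
  nlinarith [mul_nonneg (mul_nonneg (mul_nonneg hp4.le hpn.le) (mul_nonneg hp1.le hp1.le))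
    (by positivity : (0:ℝ) ≤ (n:ℝ) + 2)]

end BesselAux

/-- The hard-edge spacing density at `a = 0`,
`A_0(z) = (1/4) e^{-z/4} [I_2(√z)^2 - I_1(√z) I_3(√z)]`, is nonnegative. -/
theorem hard_edge_density_a0_nonneg (z : ℝ) (hz : 0 ≤ z) :
    0 ≤ (1 / 4 : ℝ) * Real.exp (-z / 4) *
      (besselI 2 (Real.sqrt z) ^ 2 - besselI 1 (Real.sqrt z) * besselI 3 (Real.sqrt z)) := by
  have h := BesselAux.turan (Real.sqrt_nonneg z)
  have : (0:ℝ) < Real.exp (-z / 4) := Real.exp_pos _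
  nlinarith
end

section
/- For orthonormal polynomials $p_n$ of a positive weight on $(0,\infty)$, the ratio is monotone outside the support: for all $x<0$, $\frac{p_n'(x)}{p_n(x)}<\frac{p_{n-1}'(x)}{p_{n-1}(x)}$, and consequently $\frac{p_n(-y)}{p_{n-1}(-y)}<\frac{p_n(0)}{p_{n-1}(0)}<0$ for all $y>0$. -/
open MeasureTheory Polynomial

section Aux

variable (w : ℝ → ℝ) (p : ℕ → Polynomial ℝ) (γ : ℕ → ℝ)

/-- integrability of `w * q` for any polynomial q -/
lemma op_intg (hmom : ∀ m : ℕ, IntegrableOn (fun x => w x * x ^ m) (Set.Ioi 0))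
    (q : Polynomial ℝ) : IntegrableOn (fun x => w x * q.eval x) (Set.Ioi 0) := by
  induction q using Polynomial.induction_on' with
  | add f g hf hg =>
    have h2 : IntegrableOn (fun x => w x * f.eval x + w x * g.eval x) (Set.Ioi 0) :=
      hf.add hg
    refine h2.congr_fun ?_ measurableSet_Ioi
    intro x _; simp [mul_add]
  | monomial k c =>
    have h2 : IntegrableOn (fun x => c * (w x * x ^ k)) (Set.Ioi 0) :=
      (hmom k).const_mul c
    refine h2.congr_fun ?_ measurableSet_Ioi
    intro x _; simp [eval_monomial]; ring

lemma op_intg2 (hmom : ∀ m : ℕ, IntegrableOn (fun x => w x * x ^ m) (Set.Ioi 0))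
    (q r : Polynomial ℝ) :
    IntegrableOn (fun x => w x * q.eval x * r.eval x) (Set.Ioi 0) := by
  refine (op_intg w hmom (q * r)).congr_fun ?_ measurableSet_Ioi
  intro x _; simp only [eval_mul]; ring

/-- triangular basis representation -/
lemma op_repr (hdeg : ∀ n, (p n).degree = n) (hγ : ∀ n, 0 < γ n)
    (hlead : ∀ n, (p n).leadingCoeff = γ n) :
    ∀ (N : ℕ) (q : Polynomial ℝ), q.degree ≤ (N : ℕ) →
      ∃ c : ℕ → ℝ, q = ∑ j ∈ Finset.range (N + 1), Polynomial.C (c j) * p j := by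
  have hnat : ∀ j, (p j).natDegree = j := fun j => natDegree_eq_of_degree_eq_some (hdeg j)
  have hcoeff : ∀ j, (p j).coeff j = γ j := by
    intro j
    have := hlead j
    rwa [Polynomial.leadingCoeff, hnat j] at this
  intro N
  induction N with
  | zero =>
    intro q hq
    refine ⟨fun _ => q.coeff 0 / γ 0, ?_⟩
    rw [Finset.sum_range_one]
    have hp0 : p 0 = Polynomial.C (γ 0) := by
      have := Polynomial.eq_C_of_degree_le_zero (le_of_eq (hdeg 0))
      rw [this, hcoeff 0]
    rw [hp0, ← Polynomial.C_mul, div_mul_cancel₀ _ (ne_of_gt (hγ 0))]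
    exact Polynomial.eq_C_of_degree_le_zero hq
  | succ N ih =>
    intro q hq
    set c' := q.coeff (N + 1) / γ (N + 1) with hc'
    set q' := q - Polynomial.C c' * p (N + 1) with hq'def
    have hq' : q'.degree ≤ (N : ℕ) := by
      refine Polynomial.degree_le_iff_coeff_zero _ _ |>.mpr ?_
      intro m hm
      have hmN : N < m := by exact_mod_cast hm
      rw [hq'def, Polynomial.coeff_sub, Polynomial.coeff_C_mul]
      rcases eq_or_lt_of_le (Nat.succ_le_of_lt hmN) with h | h
      · rw [← h, hcoeff (N + 1), hc', div_mul_cancel₀ _ (ne_of_gt (hγ (N + 1))), sub_self]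
      · have h1 : q.coeff m = 0 := by
          apply Polynomial.coeff_eq_zero_of_degree_lt
          exact lt_of_le_of_lt hq (by exact_mod_cast h)
        have h2 : (p (N + 1)).coeff m = 0 := by
          apply Polynomial.coeff_eq_zero_of_degree_lt
          rw [hdeg (N + 1)]; exact_mod_cast h
        rw [h1, h2, mul_zero, sub_zero]
    obtain ⟨c, hc⟩ := ih q' hq'
    refine ⟨fun j => if j = N + 1 then c' else c j, ?_⟩
    beta_reduce
    have heq : ∑ j ∈ Finset.range (N + 1),
        Polynomial.C (if j = N + 1 then c' else c j) * p j
        = ∑ j ∈ Finset.range (N + 1), Polynomial.C (c j) * p j := by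
      refine Finset.sum_congr rfl fun j hj => ?_
      have : j ≠ N + 1 := by
        have := Finset.mem_range.mp hj; omega
      rw [if_neg this]
    have hq2 : q = q' + Polynomial.C c' * p (N + 1) := by rw [hq'def]; ring
    rw [hq2, hc]
    conv_rhs => rw [Finset.sum_range_succ]
    rw [heq, if_pos rfl]

lemma op_degree_C_mul_le (r : ℝ) (q : Polynomial ℝ) :
    (Polynomial.C r * q).degree ≤ q.degree := by
  refine (Polynomial.degree_mul_le _ _).trans ?_
  calc (Polynomial.C r).degree + q.degree ≤ 0 + q.degree :=
        add_le_add Polynomial.degree_C_le le_rfl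
    _ = q.degree := zero_add _

lemma op_J_sum (hmom : ∀ m : ℕ, IntegrableOn (fun x => w x * x ^ m) (Set.Ioi 0))
    (horth : ∀ m n, (∫ x in Set.Ioi (0 : ℝ), w x * (p m).eval x * (p n).eval x)
        = if m = n then 1 else 0)
    (K : ℕ) (c : ℕ → ℝ) (i : ℕ) :
    (∫ x in Set.Ioi (0 : ℝ),
        w x * ((∑ j ∈ Finset.range K, Polynomial.C (c j) * p j).eval x) * (p i).eval x)
      = if i ∈ Finset.range K then c i else 0 := by
  have hpt : ∀ x : ℝ, w x * ((∑ j ∈ Finset.range K, Polynomial.C (c j) * p j).eval x)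
      * (p i).eval x
      = ∑ j ∈ Finset.range K, c j * (w x * (p j).eval x * (p i).eval x) := by
    intro x
    rw [Polynomial.eval_finset_sum, Finset.mul_sum, Finset.sum_mul]
    exact Finset.sum_congr rfl fun j _ => by simp [Polynomial.eval_mul]; ring
  simp_rw [hpt]
  rw [integral_finset_sum _ (fun j _ => ((op_intg2 w hmom (p j) (p i)).const_mul (c j)))]
  simp_rw [MeasureTheory.integral_const_mul, horth]
  simp only [mul_ite, mul_one, mul_zero]
  exact Finset.sum_ite_eq' (Finset.range K) i c

lemma op_ortho_lower (hmom : ∀ m : ℕ, IntegrableOn (fun x => w x * x ^ m) (Set.Ioi 0))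
    (hdeg : ∀ n, (p n).degree = n) (hγ : ∀ n, 0 < γ n)
    (hlead : ∀ n, (p n).leadingCoeff = γ n)
    (horth : ∀ m n, (∫ x in Set.Ioi (0 : ℝ), w x * (p m).eval x * (p n).eval x)
        = if m = n then 1 else 0)
    (N : ℕ) (q : Polynomial ℝ) (hq : q.degree ≤ (N : ℕ)) (i : ℕ) (hi : N < i) :
    (∫ x in Set.Ioi (0 : ℝ), w x * q.eval x * (p i).eval x) = 0 := by
  obtain ⟨c, hc⟩ := op_repr p γ hdeg hγ hlead N q hq
  rw [hc, op_J_sum w p hmom horth, if_neg (by simp; omega)]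

lemma op_zero_of_ortho (hmom : ∀ m : ℕ, IntegrableOn (fun x => w x * x ^ m) (Set.Ioi 0))
    (hdeg : ∀ n, (p n).degree = n) (hγ : ∀ n, 0 < γ n)
    (hlead : ∀ n, (p n).leadingCoeff = γ n)
    (horth : ∀ m n, (∫ x in Set.Ioi (0 : ℝ), w x * (p m).eval x * (p n).eval x)
        = if m = n then 1 else 0)
    (N : ℕ) (q : Polynomial ℝ) (hq : q.degree ≤ (N : ℕ))
    (h : ∀ i, i ≤ N → (∫ x in Set.Ioi (0 : ℝ), w x * q.eval x * (p i).eval x) = 0) :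
    q = 0 := by
  obtain ⟨c, hc⟩ := op_repr p γ hdeg hγ hlead N q hq
  have hzero : ∀ j ∈ Finset.range (N + 1), Polynomial.C (c j) * p j = 0 := by
    intro j hj
    have hj' : j ≤ N := by have := Finset.mem_range.mp hj; omega
    have := h j hj'
    rw [hc, op_J_sum w p hmom horth, if_pos hj] at this
    rw [this]; simp
  rw [hc, Finset.sum_congr rfl hzero, Finset.sum_const_zero]

noncomputable def opA (k : ℕ) : ℝ :=
  ∫ x in Set.Ioi (0 : ℝ), w x * (Polynomial.X * p k).eval x * (p (k + 1)).eval x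

noncomputable def opB (k : ℕ) : ℝ :=
  ∫ x in Set.Ioi (0 : ℝ), w x * (Polynomial.X * p k).eval x * (p k).eval x

lemma op_sym (q : Polynomial ℝ) (i : ℕ) :
    (∫ x in Set.Ioi (0 : ℝ), w x * (Polynomial.X * q).eval x * (p i).eval x)
      = ∫ x in Set.Ioi (0 : ℝ), w x * (Polynomial.X * p i).eval x * q.eval x := by
  have : (fun x => w x * (Polynomial.X * q).eval x * (p i).eval x)
      = fun x => w x * (Polynomial.X * p i).eval x * q.eval x := by
    funext x; simp only [Polynomial.eval_mul, Polynomial.eval_X]; ring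
  rw [this]

lemma op_degree_X_mul (hdeg : ∀ n, (p n).degree = n) (k : ℕ) :
    (Polynomial.X * p k).degree ≤ ((k + 1 : ℕ) : WithBot ℕ) := by
  refine (Polynomial.degree_mul_le _ _).trans ?_
  rw [Polynomial.degree_X, hdeg k]
  exact_mod_cast le_of_eq (by omega : 1 + k = k + 1)

variable (hmom : ∀ m : ℕ, IntegrableOn (fun x => w x * x ^ m) (Set.Ioi 0))
    (hdeg : ∀ n, (p n).degree = n) (hγ : ∀ n, 0 < γ n)
    (hlead : ∀ n, (p n).leadingCoeff = γ n)
    (horth : ∀ m n, (∫ x in Set.Ioi (0 : ℝ), w x * (p m).eval x * (p n).eval x)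
        = if m = n then 1 else 0)

include hmom hdeg hγ hlead horth in
lemma op_rec_gen (k : ℕ) (r : Polynomial ℝ)
    (hr : r = if k = 0 then Polynomial.C (opA w p 0) * p 1 + Polynomial.C (opB w p 0) * p 0
      else Polynomial.C (opA w p k) * p (k + 1) + Polynomial.C (opB w p k) * p k
        + Polynomial.C (opA w p (k - 1)) * p (k - 1)) :
    Polynomial.X * p k = r := by
  have hintq : ∀ q s : Polynomial ℝ,
      IntegrableOn (fun x => w x * q.eval x * s.eval x) (Set.Ioi 0) := fun q s => by
    refine (op_intg w hmom (q * s)).congr_fun ?_ measurableSet_Ioi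
    intro x _; simp only [Polynomial.eval_mul]; ring
  have Jsub : ∀ q s : Polynomial ℝ, ∀ i,
      (∫ x in Set.Ioi (0 : ℝ), w x * (q - s).eval x * (p i).eval x)
        = (∫ x in Set.Ioi (0 : ℝ), w x * q.eval x * (p i).eval x)
          - ∫ x in Set.Ioi (0 : ℝ), w x * s.eval x * (p i).eval x := by
    intro q s i
    rw [show (fun x => w x * (q - s).eval x * (p i).eval x)
        = fun x => w x * q.eval x * (p i).eval x - w x * s.eval x * (p i).eval x from
      funext fun x => by simp only [Polynomial.eval_sub]; ring]
    exact integral_sub (hintq q (p i)) (hintq s (p i))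
  have Jadd : ∀ q s : Polynomial ℝ, ∀ i,
      (∫ x in Set.Ioi (0 : ℝ), w x * (q + s).eval x * (p i).eval x)
        = (∫ x in Set.Ioi (0 : ℝ), w x * q.eval x * (p i).eval x)
          + ∫ x in Set.Ioi (0 : ℝ), w x * s.eval x * (p i).eval x := by
    intro q s i
    rw [show (fun x => w x * (q + s).eval x * (p i).eval x)
        = fun x => w x * q.eval x * (p i).eval x + w x * s.eval x * (p i).eval x from
      funext fun x => by simp only [Polynomial.eval_add]; ring]
    exact integral_add (hintq q (p i)) (hintq s (p i))
  have JC : ∀ (t : ℝ) (q : Polynomial ℝ) (i : ℕ),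
      (∫ x in Set.Ioi (0 : ℝ), w x * (Polynomial.C t * q).eval x * (p i).eval x)
        = t * ∫ x in Set.Ioi (0 : ℝ), w x * q.eval x * (p i).eval x := by
    intro t q i
    rw [show (fun x => w x * (Polynomial.C t * q).eval x * (p i).eval x)
        = fun x => t * (w x * q.eval x * (p i).eval x) from
      funext fun x => by simp only [Polynomial.eval_mul, Polynomial.eval_C]; ring]
    exact MeasureTheory.integral_const_mul t _
  have hA : ∀ j : ℕ, (∫ x in Set.Ioi (0 : ℝ),
      w x * (Polynomial.X * p j).eval x * (p (j + 1)).eval x) = opA w p j := fun j => rfl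
  have hB : ∀ j : ℕ, (∫ x in Set.Ioi (0 : ℝ),
      w x * (Polynomial.X * p j).eval x * (p j).eval x) = opB w p j := fun j => rfl
  have hb : ∀ (t : ℝ) (j : ℕ), j ≤ k + 1 →
      (Polynomial.C t * p j).degree ≤ ((k + 1 : ℕ) : WithBot ℕ) := by
    intro t j hj
    refine (op_degree_C_mul_le t (p j)).trans ?_
    rw [hdeg j]; exact_mod_cast hj
  have hXi : ∀ j, (∫ x in Set.Ioi (0:ℝ), w x * (Polynomial.X * p k).eval x * (p j).eval x)
      = ∫ x in Set.Ioi (0:ℝ), w x * (Polynomial.X * p j).eval x * (p k).eval x :=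
    fun j => op_sym w p (p k) j
  rcases Nat.eq_zero_or_pos k with hk0 | hk0
  · subst hk0
    rw [if_pos rfl] at hr
    have key : Polynomial.X * p 0 - r = 0 := by
      apply op_zero_of_ortho w p γ hmom hdeg hγ hlead horth 1
      · refine (Polynomial.degree_sub_le _ _).trans (max_le (op_degree_X_mul p hdeg 0) ?_)
        rw [hr]
        exact (Polynomial.degree_add_le _ _).trans
          (max_le (hb _ 1 (by omega)) (hb _ 0 (by omega)))
      · intro i hi
        rw [Jsub, hr, Jadd, JC, JC, horth, horth]
        rcases (by omega : i = 0 ∨ i = 1) with rfl | rfl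
        · rw [if_neg (by omega), if_pos rfl, hB 0]; ring
        · rw [if_pos rfl, if_neg (by omega), hA 0]; ring
    exact sub_eq_zero.mp key
  · rw [if_neg (by omega)] at hr
    have key : Polynomial.X * p k - r = 0 := by
      apply op_zero_of_ortho w p γ hmom hdeg hγ hlead horth (k + 1)
      · refine (Polynomial.degree_sub_le _ _).trans (max_le (op_degree_X_mul p hdeg k) ?_)
        rw [hr]
        refine (Polynomial.degree_add_le _ _).trans (max_le
          ((Polynomial.degree_add_le _ _).trans (max_le (hb _ (k + 1) (by omega))
            (hb _ k (by omega)))) (hb _ (k - 1) (by omega)))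
      · intro i hi
        rw [Jsub, hr, Jadd, Jadd, JC, JC, JC, horth, horth, horth]
        rcases (by omega : i = k + 1 ∨ i = k ∨ i = k - 1 ∨ i + 2 ≤ k)
          with hik | hik | hik | hik
        · rw [if_pos (by omega), if_neg (by omega), if_neg (by omega), hik, hA k]; ring
        · rw [if_neg (by omega), if_pos (by omega), if_neg (by omega), hik, hB k]; ring
        · rw [if_neg (by omega), if_neg (by omega), if_pos (by omega), hik, hXi (k - 1)]
          have h2 : (∫ x in Set.Ioi (0:ℝ),
              w x * (Polynomial.X * p (k-1)).eval x * (p k).eval x) = opA w p (k - 1) := by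
            have h3 := hA (k - 1)
            rwa [show k - 1 + 1 = k from by omega] at h3
          rw [h2]; ring
        · rw [if_neg (by omega), if_neg (by omega), if_neg (by omega), hXi i,
            op_ortho_lower w p γ hmom hdeg hγ hlead horth (i + 1) _
              (op_degree_X_mul p hdeg i) k (by omega)]
          ring
    exact sub_eq_zero.mp key

include hmom hdeg hγ hlead horth in
lemma op_gamma (k : ℕ) : γ k = opA w p k * γ (k + 1) := by
  have hnat : ∀ j, (p j).natDegree = j := fun j => natDegree_eq_of_degree_eq_some (hdeg j)
  have hcoeff : ∀ j, (p j).coeff j = γ j := by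
    intro j
    have := hlead j
    rwa [Polynomial.leadingCoeff, hnat j] at this
  have hhigh : ∀ j i : ℕ, j < i → (p j).coeff i = 0 := by
    intro j i hj
    apply Polynomial.coeff_eq_zero_of_degree_lt
    rw [hdeg j]; exact_mod_cast hj
  have hrec := op_rec_gen w p γ hmom hdeg hγ hlead horth k _ rfl
  have hco := congrArg (fun q => Polynomial.coeff q (k + 1)) hrec
  simp only [Polynomial.coeff_X_mul] at hco
  rcases Nat.eq_zero_or_pos k with hk0 | hk0
  · subst hk0
    rw [if_pos rfl] at hco
    simp only [Polynomial.coeff_add, Polynomial.coeff_C_mul] at hco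
    rw [hcoeff 0, hcoeff 1, hhigh 0 1 (by omega)] at hco
    rw [hco]; ring
  · rw [if_neg (by omega)] at hco
    simp only [Polynomial.coeff_add, Polynomial.coeff_C_mul] at hco
    rw [hcoeff k, hcoeff (k + 1), hhigh k (k + 1) (by omega),
      hhigh (k - 1) (k + 1) (by omega)] at hco
    rw [hco]; ring

include hmom hdeg hγ hlead horth in
lemma op_opA_pos (k : ℕ) : 0 < opA w p k := by
  have h := op_gamma w p γ hmom hdeg hγ hlead horth k
  nlinarith [hγ k, hγ (k + 1)]

include hmom hdeg hγ hlead horth in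
lemma op_CD (k : ℕ) :
    Polynomial.C (opA w p k) * (p k * Polynomial.derivative (p (k + 1))
        - p (k + 1) * Polynomial.derivative (p k))
      = ∑ j ∈ Finset.range (k + 1), (p j) ^ 2 := by
  have hp0 : p 0 = Polynomial.C (γ 0) := by
    have h := Polynomial.eq_C_of_degree_le_zero (le_of_eq (hdeg 0))
    have hc : (p 0).coeff 0 = γ 0 := by
      have := hlead 0
      rwa [Polynomial.leadingCoeff, natDegree_eq_of_degree_eq_some (hdeg 0)] at this
    rw [h, hc]
  induction k with
  | zero =>
    have h := op_rec_gen w p γ hmom hdeg hγ hlead horth 0 _ rfl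
    rw [if_pos rfl] at h
    have dp0 : Polynomial.derivative (p 0) = 0 := by rw [hp0, Polynomial.derivative_C]
    have h1 : Polynomial.C (opA w p 0) * p 1
        = Polynomial.X * p 0 - Polynomial.C (opB w p 0) * p 0 := by
      linear_combination -h
    have h2 : Polynomial.C (opA w p 0) * Polynomial.derivative (p 1) = p 0 := by
      have h3 := congrArg (fun q => Polynomial.derivative q) h1
      simpa [Polynomial.derivative_C_mul, Polynomial.derivative_sub,
        Polynomial.derivative_mul, Polynomial.derivative_X, dp0] using h3
    rw [Finset.sum_range_one, dp0]
    linear_combination (p 0) * h2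
  | succ k ih =>
    have h := op_rec_gen w p γ hmom hdeg hγ hlead horth (k + 1) _ rfl
    rw [if_neg (by omega)] at h
    simp only [Nat.add_sub_cancel] at h
    have h1 : Polynomial.C (opA w p (k + 1)) * p (k + 2)
        = Polynomial.X * p (k + 1) - Polynomial.C (opB w p (k + 1)) * p (k + 1)
          - Polynomial.C (opA w p k) * p k := by
      linear_combination -h
    have h2 : Polynomial.C (opA w p (k + 1)) * Polynomial.derivative (p (k + 2))
        = p (k + 1) + Polynomial.X * Polynomial.derivative (p (k + 1))
          - Polynomial.C (opB w p (k + 1)) * Polynomial.derivative (p (k + 1))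
          - Polynomial.C (opA w p k) * Polynomial.derivative (p k) := by
      have h3 := congrArg (fun q => Polynomial.derivative q) h1
      simpa [Polynomial.derivative_C_mul, Polynomial.derivative_sub,
        Polynomial.derivative_mul, Polynomial.derivative_X] using h3
    rw [Finset.sum_range_succ, ← ih]
    linear_combination (p (k + 1)) * h2 - (Polynomial.derivative (p (k + 1))) * h1

include hmom hdeg hγ hlead horth in
lemma op_W_pos (k : ℕ) (x : ℝ) :
    0 < (p k * Polynomial.derivative (p (k + 1))
        - p (k + 1) * Polynomial.derivative (p k)).eval x := by
  have hp0 : p 0 = Polynomial.C (γ 0) := by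
    have h := Polynomial.eq_C_of_degree_le_zero (le_of_eq (hdeg 0))
    have hc : (p 0).coeff 0 = γ 0 := by
      have := hlead 0
      rwa [Polynomial.leadingCoeff, natDegree_eq_of_degree_eq_some (hdeg 0)] at this
    rw [h, hc]
  have hcd := congrArg (fun q => Polynomial.eval x q)
    (op_CD w p γ hmom hdeg hγ hlead horth k)
  simp only [Polynomial.eval_mul, Polynomial.eval_C, Polynomial.eval_finset_sum,
    Polynomial.eval_pow] at hcd
  have hmem : (0 : ℕ) ∈ Finset.range (k + 1) := Finset.mem_range.mpr (by omega)
  have hsum : (p 0).eval x ^ 2 ≤ ∑ j ∈ Finset.range (k + 1), (p j).eval x ^ 2 :=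
    Finset.single_le_sum (fun i _ => sq_nonneg ((p i).eval x)) hmem
  rw [hp0] at hsum
  simp only [Polynomial.eval_C] at hsum
  have hA := op_opA_pos w p γ hmom hdeg hγ hlead horth k
  nlinarith [hγ 0]

/-- a real polynomial with no real roots and positive leading coefficient is positive -/
lemma op_pos_of_no_roots (Q : Polynomial ℝ) (hQ0 : Q ≠ 0) (hroots : Q.roots = 0)
    (hlc : 0 < Q.leadingCoeff) (y : ℝ) : 0 < Q.eval y := by
  have hne : ∀ z : ℝ, Q.eval z ≠ 0 := by
    intro z hz
    have : z ∈ Q.roots := Polynomial.mem_roots'.mpr ⟨hQ0, hz⟩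
    rw [hroots] at this
    exact absurd this (Multiset.notMem_zero z)
  rcases Nat.eq_zero_or_pos Q.natDegree with h0 | h0
  · obtain ⟨c, hc⟩ := Polynomial.natDegree_eq_zero.mp h0
    have : Q.leadingCoeff = c := by rw [← hc]; simp [Polynomial.leadingCoeff]
    rw [← hc]; simp only [Polynomial.eval_C]
    rw [← this]; exact hlc
  · by_contra hy
    push_neg at hy
    have hylt : Q.eval y < 0 := lt_of_le_of_ne hy (hne y)
    have htend := Polynomial.tendsto_atTop_of_leadingCoeff_nonneg Q
      (Polynomial.natDegree_pos_iff_degree_pos.mp h0) hlc.le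
    obtain ⟨z, hz⟩ := ((htend.eventually_gt_atTop 0).and (Filter.eventually_ge_atTop y)).exists
    have hcont : ContinuousOn (fun t => Q.eval t) (Set.Icc y z) :=
      (Polynomial.continuous Q).continuousOn
    have h0mem : (0:ℝ) ∈ Set.Icc (Q.eval y) (Q.eval z) := ⟨hylt.le, hz.1.le⟩
    obtain ⟨c, _, hc⟩ := intermediate_value_Icc hz.2 hcont h0mem
    exact hne c hc

/-- sign of a polynomial with positive roots on the nonpositive axis -/
lemma op_sign_from_roots (m : ℕ) (P : Polynomial ℝ) (hm : P.natDegree = m)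
    (hroots : Multiset.card P.roots = m) (hpos : ∀ r ∈ P.roots, (0:ℝ) < r)
    (hlc : 0 < P.leadingCoeff) (x : ℝ) (hx : x ≤ 0) : 0 < (-1 : ℝ) ^ m * P.eval x := by
  have hfac := Polynomial.C_leadingCoeff_mul_prod_multiset_X_sub_C (p := P) (by rw [hroots, hm])
  have hmapeq : Multiset.map (Polynomial.eval x ∘ fun a => Polynomial.X - Polynomial.C a)
      P.roots = Multiset.map (fun r => x - r) P.roots :=
    Multiset.map_congr rfl fun r _ => by
      simp [Function.comp_apply, Polynomial.eval_sub, Polynomial.eval_X, Polynomial.eval_C]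
  have heval : P.eval x
      = P.leadingCoeff * (P.roots.map fun r => x - r).prod := by
    conv_lhs => rw [← hfac]
    rw [Polynomial.eval_mul, Polynomial.eval_C, Polynomial.eval_multiset_prod,
      Multiset.map_map, hmapeq]
  have hneg : (P.roots.map fun r => x - r)
      = P.roots.map fun r => (-1) * (r - x) := Multiset.map_congr rfl (fun r _ => by ring)
  have hprodpos : 0 < (P.roots.map fun r => r - x).prod := by
    apply Multiset.prod_pos
    intro a ha
    obtain ⟨r, hr, rfl⟩ := Multiset.mem_map.mp ha
    have := hpos r hr
    linarith
  have hsplit : (P.roots.map fun r => (-1 : ℝ) * (r - x)).prod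
      = (-1 : ℝ) ^ m * (P.roots.map fun r => r - x).prod := by
    rw [Multiset.prod_map_mul, Multiset.map_const', Multiset.prod_replicate, hroots]
  rw [heval, hneg, hsplit]
  have hsq : (-1 : ℝ) ^ m * (-1 : ℝ) ^ m = 1 := by
    rw [← pow_add]
    exact Even.neg_one_pow ⟨m, rfl⟩
  have key : (-1 : ℝ) ^ m * (P.leadingCoeff * ((-1 : ℝ) ^ m
      * (P.roots.map fun r => r - x).prod))
      = P.leadingCoeff * (P.roots.map fun r => r - x).prod := by
    rw [show (-1 : ℝ) ^ m * (P.leadingCoeff * ((-1 : ℝ) ^ m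
        * (P.roots.map fun r => r - x).prod))
      = ((-1 : ℝ) ^ m * (-1 : ℝ) ^ m) * (P.leadingCoeff
        * (P.roots.map fun r => r - x).prod) from by ring, hsq, one_mul]
  rw [key]
  exact mul_pos hlc hprodpos

lemma op_eval_msetprod (s : Multiset ℝ) (y : ℝ) :
    ((s.map fun r => Polynomial.X - Polynomial.C r).prod).eval y
      = (s.map fun r => y - r).prod := by
  rw [Polynomial.eval_multiset_prod, Multiset.map_map]
  exact congrArg Multiset.prod (Multiset.map_congr rfl fun r _ => by
    simp [Function.comp_apply, Polynomial.eval_sub, Polynomial.eval_X, Polynomial.eval_C])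

variable (hw : ∀ x ∈ Set.Ioi (0 : ℝ), 0 < w x)

include hw hmom hdeg hγ hlead horth in
lemma op_sign (m : ℕ) (x : ℝ) (hx : x ≤ 0) : 0 < (-1 : ℝ) ^ m * (p m).eval x := by
  classical
  have hnat : (p m).natDegree = m := natDegree_eq_of_degree_eq_some (hdeg m)
  have hP0 : p m ≠ 0 := by
    intro h
    have h2 := hdeg m
    rw [h, Polynomial.degree_zero] at h2
    exact absurd h2 (by simp)
  set P := p m with hPdef
  have hlcP : 0 < P.leadingCoeff := by rw [hPdef, hlead m]; exact hγ m
  set R := P.roots.toFinset.filter (fun r => 0 < r ∧ Odd (P.roots.count r)) with hRdef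
  have hcard : m ≤ R.card := by
    by_contra hlt
    push_neg at hlt
    set q := (R.val.map fun r => Polynomial.X - Polynomial.C r).prod with hqdef
    have monq : q.Monic :=
      Polynomial.monic_multiset_prod_of_monic _ _ fun r _ => Polynomial.monic_X_sub_C r
    have hdq : q.degree ≤ ((R.card : ℕ) : WithBot ℕ) := by
      rw [Polynomial.degree_eq_natDegree monq.ne_zero, hqdef,
        Polynomial.natDegree_multiset_prod_X_sub_C_eq_card]
      exact le_of_eq (by norm_cast)
    have hJ : (∫ y in Set.Ioi (0:ℝ), w y * q.eval y * P.eval y) = 0 :=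
      op_ortho_lower w p γ hmom hdeg hγ hlead horth R.card q hdq m hlt
    obtain ⟨Q, hPQ⟩ := P.prod_multiset_X_sub_C_dvd
    have hQ0 : Q ≠ 0 := fun h => hP0 (by rw [hPdef] at hPQ ⊢; rw [hPQ, h, mul_zero])
    have monprod : ((P.roots.map fun a => Polynomial.X - Polynomial.C a).prod).Monic :=
      Polynomial.monic_multiset_prod_of_monic _ _ fun r _ => Polynomial.monic_X_sub_C r
    have hrootsQ : Q.roots = 0 := by
      have h1 : P.roots = P.roots + Q.roots := by
        conv_lhs => rw [hPQ]
        rw [Polynomial.roots_mul (by rw [← hPQ]; exact hP0),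
          Polynomial.roots_multiset_prod_X_sub_C]
      exact left_eq_add.mp h1
    have hlcQ : 0 < Q.leadingCoeff := by
      have h2 : P.leadingCoeff = Q.leadingCoeff := by
        conv_lhs => rw [hPQ]
        rw [Polynomial.leadingCoeff_mul, monprod.leadingCoeff, one_mul]
      rw [← h2]; exact hlcP
    have hQpos : ∀ y, 0 < Q.eval y := op_pos_of_no_roots Q hQ0 hrootsQ hlcQ
    have hkey : ∀ y : ℝ, q.eval y * P.eval y
        = (((P.roots + R.val).map fun r => y - r).prod) * Q.eval y := by
      intro y
      conv_lhs => rw [hPQ]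
      rw [hqdef, Polynomial.eval_mul, op_eval_msetprod, op_eval_msetprod,
        Multiset.map_add, Multiset.prod_add]
      ring
    have hnn : ∀ y ∈ Set.Ioi (0:ℝ), 0 ≤ w y * q.eval y * P.eval y := by
      intro y hy
      have hy0 : (0:ℝ) < y := hy
      have hM : 0 ≤ (((P.roots + R.val).map fun r => y - r).prod) := by
        rw [Finset.prod_multiset_map_count]
        apply Finset.prod_nonneg
        intro r _
        rcases le_or_gt r 0 with hr0 | hr0
        · exact pow_nonneg (by linarith) _
        · apply Even.pow_nonneg
          rw [Multiset.count_add]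
          by_cases hmem : r ∈ R
          · have h1 : R.val.count r = 1 :=
              Multiset.count_eq_one_of_mem R.nodup (Finset.mem_def.mp hmem)
            have h2 : Odd (P.roots.count r) := (Finset.mem_filter.mp hmem).2.2
            rw [h1]
            exact h2.add_one
          · have h1 : R.val.count r = 0 :=
              Multiset.count_eq_zero.mpr (fun hh => hmem (Finset.mem_def.mpr hh))
            rw [h1, add_zero]
            by_cases hmem2 : r ∈ P.roots
            · have h3 : r ∈ P.roots.toFinset := Multiset.mem_toFinset.mpr hmem2
              have hnotodd : ¬ Odd (P.roots.count r) := by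
                intro hodd
                exact hmem (Finset.mem_filter.mpr ⟨h3, hr0, hodd⟩)
              exact Nat.not_odd_iff_even.mp hnotodd
            · rw [Multiset.count_eq_zero.mpr hmem2]
              exact Even.zero
      rw [mul_assoc, hkey y]
      exact mul_nonneg (hw y hy).le (mul_nonneg hM (hQpos y).le)
    have hint : IntegrableOn (fun y => w y * q.eval y * P.eval y) (Set.Ioi 0) :=
      op_intg2 w hmom q P
    have hae : (fun y => w y * q.eval y * P.eval y) =ᵐ[volume.restrict (Set.Ioi 0)] 0 :=
      (MeasureTheory.integral_eq_zero_iff_of_nonneg_ae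
        ((ae_restrict_iff' measurableSet_Ioi).mpr (Filter.Eventually.of_forall hnn)) hint).mp hJ
    have hae' : ∀ᵐ y ∂(volume.restrict (Set.Ioi 0)), w y * q.eval y * P.eval y = 0 := by
      filter_upwards [hae] with y h
      simpa using h
    have hae2 : ∀ᵐ y ∂(volume : Measure ℝ),
        y ∈ Set.Ioi (0:ℝ) → w y * q.eval y * P.eval y = 0 :=
      (ae_restrict_iff' measurableSet_Ioi).mp hae'
    have hZfin : {y : ℝ | (P * q).IsRoot y}.Finite :=
      Polynomial.finite_setOf_isRoot (mul_ne_zero hP0 monq.ne_zero)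
    have hsub : Set.Ioi (0:ℝ) \ {y : ℝ | (P * q).IsRoot y}
        ⊆ {y : ℝ | ¬ (y ∈ Set.Ioi (0:ℝ) → w y * q.eval y * P.eval y = 0)} := by
      intro y hy
      simp only [Set.mem_setOf_eq]
      intro hcon
      have h1 := hcon hy.1
      have h2 : (P * q).eval y ≠ 0 := hy.2
      apply h2
      rw [Polynomial.eval_mul]
      have hw0 : w y ≠ 0 := ne_of_gt (hw y hy.1)
      rcases mul_eq_zero.mp h1 with h3 | h3
      · rcases mul_eq_zero.mp h3 with h4 | h4
        · exact absurd h4 hw0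
        · rw [h4, mul_zero]
      · rw [h3, zero_mul]
    have hmeas0 : volume {y : ℝ | ¬ (y ∈ Set.Ioi (0:ℝ)
        → w y * q.eval y * P.eval y = 0)} = 0 := ae_iff.mp hae2
    have hdiff : volume (Set.Ioi (0:ℝ) \ {y : ℝ | (P * q).IsRoot y}) = 0 :=
      measure_mono_null hsub hmeas0
    rw [measure_diff_null (hZfin.measure_zero volume), Real.volume_Ioi] at hdiff
    simp at hdiff
  have hle1 : R.card ≤ P.roots.toFinset.card :=
    Finset.card_le_card (Finset.filter_subset _ _)
  have hle2 : P.roots.toFinset.card ≤ Multiset.card P.roots := Multiset.toFinset_card_le _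
  have hle3 : Multiset.card P.roots ≤ m := by
    rw [← hnat]; exact Polynomial.card_roots' P
  have hcards : Multiset.card P.roots = m := by omega
  have hReq : R = P.roots.toFinset :=
    Finset.eq_of_subset_of_card_le (Finset.filter_subset _ _) (by omega)
  have hpos : ∀ r ∈ P.roots, (0:ℝ) < r := by
    intro r hr
    have h3 : r ∈ P.roots.toFinset := Multiset.mem_toFinset.mpr hr
    rw [← hReq] at h3
    exact (Finset.mem_filter.mp h3).2.1
  exact op_sign_from_roots m P hnat hcards hpos hlcP x hx

end Aux

/-- For orthonormal polynomials of a positive weight on `(0,∞)`, the logarithmic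
derivative ratio is monotone outside the support, and consequently
`p_n(-y)/p_{n-1}(-y) < p_n(0)/p_{n-1}(0) < 0` for `y > 0`. -/
theorem orthonormal_poly_ratio_monotone
    (w : ℝ → ℝ) (hw : ∀ x ∈ Set.Ioi (0 : ℝ), 0 < w x)
    (hmom : ∀ m : ℕ, IntegrableOn (fun x => w x * x ^ m) (Set.Ioi 0))
    (p : ℕ → Polynomial ℝ) (γ : ℕ → ℝ)
    (hdeg : ∀ n, (p n).degree = n)
    (hlead : ∀ n, (p n).leadingCoeff = γ n)
    (hγ : ∀ n, 0 < γ n)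
    (horth : ∀ m n, (∫ x in Set.Ioi (0 : ℝ), w x * (p m).eval x * (p n).eval x)
        = if m = n then 1 else 0)
    (n : ℕ) (hn : 1 ≤ n) :
    (∀ x : ℝ, x < 0 →
      (Polynomial.derivative (p n)).eval x / (p n).eval x
        < (Polynomial.derivative (p (n - 1))).eval x / (p (n - 1)).eval x) ∧
    (∀ y : ℝ, 0 < y →
      (p n).eval (-y) / (p (n - 1)).eval (-y) < (p n).eval 0 / (p (n - 1)).eval 0 ∧
      (p n).eval 0 / (p (n - 1)).eval 0 < 0) := by
  obtain ⟨m, rfl⟩ : ∃ m, n = m + 1 := ⟨n - 1, by omega⟩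
  simp only [Nat.add_sub_cancel]
  have hsign : ∀ (j : ℕ) (x : ℝ), x ≤ 0 → 0 < (-1:ℝ)^j * (p j).eval x :=
    fun j x hx => op_sign w p γ hmom hdeg hγ hlead horth hw j x hx
  have hW : ∀ x : ℝ, 0 < (p m * Polynomial.derivative (p (m+1))
      - p (m+1) * Polynomial.derivative (p m)).eval x :=
    op_W_pos w p γ hmom hdeg hγ hlead horth m
  have hne : ∀ x : ℝ, x ≤ 0 → (p m).eval x ≠ 0 ∧ (p (m+1)).eval x ≠ 0
      ∧ (p (m+1)).eval x * (p m).eval x < 0 := by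
    intro x hx
    have h1 := hsign m x hx
    have h2 := hsign (m+1) x hx
    have hsq : (-1:ℝ)^m * (-1:ℝ)^(m+1) = -1 := by
      rw [pow_succ, ← mul_assoc, ← pow_add, Even.neg_one_pow ⟨m, rfl⟩, one_mul]
    refine ⟨?_, ?_, ?_⟩
    · intro h; rw [h, mul_zero] at h1; exact lt_irrefl 0 h1
    · intro h; rw [h, mul_zero] at h2; exact lt_irrefl 0 h2
    · nlinarith [mul_pos h1 h2, hsq]
  constructor
  · intro x hx
    obtain ⟨hne2, hne1, hprod⟩ := hne x hx.le
    have hWx := hW x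
    rw [Polynomial.eval_sub, Polynomial.eval_mul, Polynomial.eval_mul] at hWx
    have key : (Polynomial.derivative (p (m+1))).eval x / (p (m+1)).eval x
        - (Polynomial.derivative (p m)).eval x / (p m).eval x < 0 := by
      rw [div_sub_div _ _ hne1 hne2]
      apply div_neg_of_pos_of_neg
      · nlinarith [hWx]
      · exact hprod
    linarith [key]
  · intro y hy
    have hanti : StrictAntiOn (fun t => (p (m+1)).eval (-t) / (p m).eval (-t))
        (Set.Ici (0:ℝ)) := by
      apply strictAntiOn_of_deriv_neg (convex_Ici 0)
      · apply ContinuousOn.div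
        · exact ((Polynomial.continuous (p (m+1))).comp continuous_neg).continuousOn
        · exact ((Polynomial.continuous (p m)).comp continuous_neg).continuousOn
        · intro t ht
          exact (hne (-t) (neg_nonpos.mpr ht)).1
      · intro t ht
        rw [interior_Ici] at ht
        have htpos : (0:ℝ) < t := ht
        have hA : HasDerivAt (fun s : ℝ => (p (m+1)).eval (-s))
            ((Polynomial.derivative (p (m+1))).eval (-t) * (-1)) t :=
          (Polynomial.hasDerivAt (p (m+1)) (-t)).comp t (hasDerivAt_neg t)
        have hB : HasDerivAt (fun s : ℝ => (p m).eval (-s))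
            ((Polynomial.derivative (p m)).eval (-t) * (-1)) t :=
          (Polynomial.hasDerivAt (p m) (-t)).comp t (hasDerivAt_neg t)
        have hnem : (p m).eval (-t) ≠ 0 := (hne (-t) (by linarith)).1
        have hd := hA.div hB hnem
        rw [show (fun t : ℝ => (p (m+1)).eval (-t) / (p m).eval (-t)) = ((fun s : ℝ => (p (m+1)).eval (-s)) / fun s : ℝ => (p m).eval (-s)) from rfl, hd.deriv]
        apply div_neg_of_neg_of_pos
        · have hWt := hW (-t)
          rw [Polynomial.eval_sub, Polynomial.eval_mul, Polynomial.eval_mul] at hWt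
          nlinarith [hWt]
        · have hsqne : (p m).eval (-t) ^ 2 ≠ 0 := pow_ne_zero 2 hnem
          exact lt_of_le_of_ne (sq_nonneg _) (Ne.symm hsqne)
    constructor
    · have h0 : (0:ℝ) ∈ Set.Ici (0:ℝ) := Set.mem_Ici.mpr le_rfl
      have hy' : y ∈ Set.Ici (0:ℝ) := Set.mem_Ici.mpr hy.le
      have := hanti h0 hy' hy
      simpa [neg_zero] using this
    · obtain ⟨hne2, hne1, hprod⟩ := hne 0 le_rfl
      have hrw : (p (m+1)).eval 0 / (p m).eval 0
          = ((p (m+1)).eval 0 * (p m).eval 0) / ((p m).eval 0 * (p m).eval 0) := by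
        rw [mul_div_mul_right _ _ hne2]
      rw [hrw]
      apply div_neg_of_neg_of_pos hprod
      exact lt_of_le_of_ne (mul_self_nonneg _) (Ne.symm (mul_ne_zero hne2 hne2))
end

section
/- For the deformed Laguerre weight $w(x;t)=x^2(x+t)^ae^{-x}$ on $(0,\infty)$ with $t>0$, $a>-1$, the zeros $x_{j,n}$ of the $n$-th orthogonal polynomial satisfy the bounds on reciprocal sums $\sum_{j=1}^n \frac{1}{x_{j,n}}\leq \frac n2$ and $\sum_{j=1}^n\frac{1}{x_{j,n}+t}\leq\frac{n}{a+3}$. -/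
open MeasureTheory Polynomial Finset Filter Real Set

namespace DLZRB

noncomputable def wf (a t : ℝ) (u : Polynomial ℝ) : ℝ → ℝ :=
  fun x => (x + t) ^ a * u.eval x * Real.exp (-x)

noncomputable def Iw (a t : ℝ) (u : Polynomial ℝ) : ℝ :=
  ∫ x in Set.Ioi (0:ℝ), wf a t u x

lemma poly_exp_decay (c : ℝ) (hc : 0 < c) (q : Polynomial ℝ) :
    Tendsto (fun x => q.eval x * Real.exp (-(c * x))) atTop (nhds 0) := by
  have key : ∀ i : ℕ, Tendsto (fun x : ℝ => x ^ i * Real.exp (-(c * x))) atTop (nhds 0) := by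
    intro i
    have h := tendsto_rpow_mul_exp_neg_mul_atTop_nhds_zero i c hc
    refine h.congr fun x => ?_
    rw [Real.rpow_natCast, neg_mul]
  have : Tendsto (fun x : ℝ => ∑ i ∈ Finset.range (q.natDegree + 1),
      q.coeff i * (x ^ i * Real.exp (-(c * x)))) atTop (nhds 0) := by
    have := tendsto_finset_sum (Finset.range (q.natDegree + 1))
      (fun i _ => (key i).const_mul (q.coeff i))
    simpa using this
  refine this.congr fun x => ?_
  rw [Polynomial.eval_eq_sum_range, Finset.sum_mul]
  congr 1; funext i; ring

lemma wf_decay {t : ℝ} (ht : 0 < t) (b c : ℝ) (hc : 0 < c) (q : Polynomial ℝ) :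
    Tendsto (fun x => (x + t) ^ b * q.eval x * Real.exp (-(c * x))) atTop (nhds 0) := by
  have h1 : Tendsto (fun x : ℝ => (x + t) ^ b * Real.exp (-(c / 2 * (x + t)))) atTop (nhds 0) := by
    have h := tendsto_rpow_mul_exp_neg_mul_atTop_nhds_zero b (c / 2) (by positivity)
    have := h.comp (tendsto_atTop_add_const_right atTop t tendsto_id)
    refine this.congr fun x => ?_
    simp [Function.comp, neg_mul]
  have h2 := poly_exp_decay (c / 2) (by positivity) q
  have h3 := (h1.mul h2).const_mul (Real.exp (c / 2 * t))
  rw [mul_zero, mul_zero] at h3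
  refine h3.congr fun x => ?_
  rw [show (-(c * x)) = (c / 2 * t) + (-(c / 2 * (x + t))) + (-(c / 2 * x)) by ring,
    Real.exp_add, Real.exp_add]
  ring

lemma wf_contOn {t : ℝ} (ht : 0 < t) (b : ℝ) (q : Polynomial ℝ) :
    ContinuousOn (wf b t q) (Set.Ici 0) := by
  unfold wf
  refine ContinuousOn.mul (ContinuousOn.mul ?_ ?_) ?_
  · exact ((continuous_id.add continuous_const).continuousOn).rpow_const
      (fun x hx => Or.inl (by have : (0:ℝ) ≤ x := hx; show x + t ≠ 0; positivity))
  · exact (Polynomial.continuous q).continuousOn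
  · exact (Real.continuous_exp.comp continuous_neg).continuousOn

lemma wf_integrable {t : ℝ} (ht : 0 < t) (b : ℝ) (q : Polynomial ℝ) :
    IntegrableOn (wf b t q) (Set.Ioi 0) := by
  refine integrable_of_isBigO_exp_neg (one_half_pos) (wf_contOn ht b q) ?_
  have hlit : (wf b t q) =o[atTop] fun x => Real.exp (-(1/2 : ℝ) * x) := by
    rw [Asymptotics.isLittleO_iff_tendsto (fun x h => absurd h (Real.exp_ne_zero _))]
    have := wf_decay ht b (1/2) one_half_pos q
    refine this.congr fun x => ?_
    rw [eq_div_iff (Real.exp_ne_zero _)]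
    unfold wf
    rw [mul_assoc ((x+t)^b * q.eval x), ← Real.exp_add,
      show (-(1/2*x) + -(1/2)*x : ℝ) = -x by ring]
  exact hlit.isBigO

lemma Iw_zero (a t : ℝ) : Iw a t 0 = 0 := by
  unfold Iw wf; simp

lemma Iw_add {t : ℝ} (ht : 0 < t) (a : ℝ) (u v : Polynomial ℝ) :
    Iw a t (u + v) = Iw a t u + Iw a t v := by
  unfold Iw
  rw [← integral_add (wf_integrable ht a u) (wf_integrable ht a v)]
  congr 1; funext y; unfold wf; rw [Polynomial.eval_add]; ring

lemma Iw_Cmul {t : ℝ} (a c : ℝ) (u : Polynomial ℝ) :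
    Iw a t (Polynomial.C c * u) = c * Iw a t u := by
  unfold Iw
  rw [show (fun y => wf a t (Polynomial.C c * u) y) = fun y => c • wf a t u y by
    funext y; unfold wf; simp [Polynomial.eval_mul]; ring]
  rw [integral_smul]; simp

lemma Iw_sub {t : ℝ} (ht : 0 < t) (a : ℝ) (u v : Polynomial ℝ) :
    Iw a t (u - v) = Iw a t u - Iw a t v := by
  have h1 : Iw a t (u - v) + Iw a t v = Iw a t u := by
    rw [← Iw_add ht a (u - v) v, sub_add_cancel]
  linarith

lemma Iw_sum {t : ℝ} (ht : 0 < t) (a : ℝ) {ι : Type*} (s : Finset ι) (f : ι → Polynomial ℝ) :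
    Iw a t (∑ i ∈ s, f i) = ∑ i ∈ s, Iw a t (f i) := by
  classical
  induction s using Finset.induction_on with
  | empty => simp [Iw_zero]
  | insert _ _ hnot ih =>
    rw [Finset.sum_insert hnot, Finset.sum_insert hnot, Iw_add ht, ih]

lemma Iw_shift {t : ℝ} (ht : 0 < t) (a : ℝ) (u : Polynomial ℝ) :
    Iw (a - 1) t ((Polynomial.X + Polynomial.C t) * u) = Iw a t u := by
  unfold Iw
  refine setIntegral_congr_fun measurableSet_Ioi fun y hy => ?_
  have hyt : (0:ℝ) < y + t := by have : (0:ℝ) < y := hy; positivity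
  unfold wf
  rw [Real.rpow_sub_one (ne_of_gt hyt)]
  simp only [Polynomial.eval_mul, Polynomial.eval_add, Polynomial.eval_X, Polynomial.eval_C]
  field_simp

lemma Iw_nonneg {t : ℝ} (ht : 0 < t) (a : ℝ) (u : Polynomial ℝ)
    (hu : ∀ y ∈ Set.Ioi (0:ℝ), 0 ≤ u.eval y) : 0 ≤ Iw a t u := by
  refine setIntegral_nonneg measurableSet_Ioi fun y hy => ?_
  have h1 : (0:ℝ) < y := hy
  have h2 : (0:ℝ) ≤ (y + t) ^ a := Real.rpow_nonneg (by linarith) a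
  have h3 := hu y hy
  unfold wf
  positivity

lemma Iw_pos {t : ℝ} (ht : 0 < t) (a : ℝ) (u : Polynomial ℝ)
    (hu : ∀ y ∈ Set.Ioi (0:ℝ), 0 ≤ u.eval y) (hu0 : u ≠ 0) : 0 < Iw a t u := by
  unfold Iw
  rw [setIntegral_pos_iff_support_of_nonneg_ae ?_ (wf_integrable ht a u)]
  · have hsub : Set.Ioi (0:ℝ) \ {y | u.IsRoot y} ⊆ Function.support (wf a t u) ∩ Set.Ioi 0 := by
      rintro y ⟨hy1, hy2⟩
      have h1 : (0:ℝ) < y := hy1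
      refine ⟨?_, hy1⟩
      unfold wf
      have h2 : (y + t) ^ a ≠ 0 := (Real.rpow_pos_of_pos (by linarith) a).ne'
      have h3 : u.eval y ≠ 0 := fun h => hy2 h
      exact mul_ne_zero (mul_ne_zero h2 h3) (Real.exp_ne_zero _)
    have hroots : volume {y : ℝ | u.IsRoot y} = 0 :=
      (Polynomial.finite_setOf_isRoot hu0).measure_zero volume
    have h4 : volume (Set.Ioi (0:ℝ) \ {y | u.IsRoot y}) = ⊤ := by
      rw [measure_diff_null hroots, Real.volume_Ioi]
    calc (0:ENNReal) < ⊤ := by simp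
    _ = volume (Set.Ioi (0:ℝ) \ {y | u.IsRoot y}) := h4.symm
    _ ≤ volume (Function.support (wf a t u) ∩ Set.Ioi 0) := measure_mono hsub
  · refine (ae_restrict_iff' measurableSet_Ioi).2 (Filter.Eventually.of_forall fun y hy => ?_)
    have h1 : (0:ℝ) < y := hy
    have h2 : (0:ℝ) ≤ (y + t) ^ a := Real.rpow_nonneg (by linarith) a
    have h3 := hu y hy
    unfold wf
    positivity

lemma Iw_comb {t : ℝ} (ht : 0 < t) (b c1 c2 c3 : ℝ) (u1 u2 u3 : Polynomial ℝ) :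
    Iw b t (Polynomial.C c1 * u1 + Polynomial.C c2 * u2 + Polynomial.C c3 * u3)
      = c1 * Iw b t u1 + c2 * Iw b t u2 + c3 * Iw b t u3 := by
  rw [Iw_add ht, Iw_add ht, Iw_Cmul, Iw_Cmul, Iw_Cmul]

lemma Iw_ibp {t : ℝ} (ht : 0 < t) (a : ℝ) (u : Polynomial ℝ) :
    2 * Iw a t (Polynomial.X * u) + a * Iw (a - 1) t (Polynomial.X ^ 2 * u)
      + Iw a t (Polynomial.X ^ 2 * Polynomial.derivative u)
      = Iw a t (Polynomial.X ^ 2 * u) := by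
  set v : Polynomial ℝ := Polynomial.X ^ 2 * u with hv
  have hderiv : ∀ y ∈ Set.Ioi (0:ℝ), HasDerivAt (wf a t v)
      (a * wf (a - 1) t v y + wf a t (Polynomial.derivative v) y - wf a t v y) y := by
    intro y hy
    have hy0 : (0:ℝ) < y := hy
    have hyt : (0:ℝ) < y + t := by linarith
    have hrpow : HasDerivAt (fun z : ℝ => (z + t) ^ a) (a * (y + t) ^ (a - 1)) y := by
      have h := Real.hasDerivAt_rpow_const (x := y + t) (p := a) (Or.inl hyt.ne')
      have h2 : HasDerivAt (fun z : ℝ => z + t) 1 y := (hasDerivAt_id y).add_const t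
      simpa [Function.comp_def] using h.comp y h2
    have hp : HasDerivAt (fun z => v.eval z) (v.derivative.eval y) y := v.hasDerivAt y
    have hexp : HasDerivAt (fun z : ℝ => Real.exp (-z)) (-Real.exp (-y)) y := by
      simpa [Function.comp_def] using (Real.hasDerivAt_exp (-y)).comp y ((hasDerivAt_id y).neg)
    have h3 := (hrpow.mul hp).mul hexp
    refine h3.congr_deriv ?_
    unfold wf
    simp only [Pi.mul_apply]
    ring
  have hint : IntegrableOn (fun y => a * wf (a - 1) t v y + wf a t (Polynomial.derivative v) y
      - wf a t v y) (Set.Ioi 0) :=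
    (((wf_integrable ht (a - 1) v).const_mul a).add
      (wf_integrable ht a (Polynomial.derivative v))).sub (wf_integrable ht a v)
  have htends : Tendsto (wf a t v) atTop (nhds 0) := by
    have := wf_decay ht a 1 one_pos v
    refine this.congr fun y => ?_
    unfold wf; rw [one_mul]
  have hcont : ContinuousWithinAt (wf a t v) (Set.Ici 0) 0 :=
    (wf_contOn ht a v) 0 Set.self_mem_Ici
  have heq := integral_Ioi_of_hasDerivAt_of_tendsto hcont hderiv hint htends
  have hg0 : wf a t v 0 = 0 := by unfold wf; simp [hv]
  rw [hg0, sub_zero] at heq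
  have e1 := integral_sub (((wf_integrable ht (a - 1) v).const_mul a).add
      (wf_integrable ht a (Polynomial.derivative v))) (wf_integrable ht a v)
  have e2 := integral_add ((wf_integrable ht (a - 1) v).const_mul a)
      (wf_integrable ht a (Polynomial.derivative v))
  have e3 := integral_const_mul (μ := volume.restrict (Set.Ioi (0:ℝ))) a (wf (a - 1) t v)
  simp only [Pi.add_apply] at e1
  have hsplit : ∫ y in Set.Ioi (0:ℝ), (a * wf (a - 1) t v y
      + wf a t (Polynomial.derivative v) y - wf a t v y) =
      a * Iw (a - 1) t v + Iw a t (Polynomial.derivative v) - Iw a t v := by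
    rw [e1, e2, e3]; rfl
  rw [hsplit] at heq
  have hdv : Polynomial.derivative v = Polynomial.C 2 * (Polynomial.X * u)
      + Polynomial.X ^ 2 * Polynomial.derivative u := by
    rw [hv, Polynomial.derivative_mul, Polynomial.derivative_X_pow]
    ring
  rw [hdv, Iw_add ht, Iw_Cmul] at heq
  linarith


set_option maxHeartbeats 2000000 in
theorem core (a t : ℝ) (ha : -1 < a) (ht : 0 < t) (n : ℕ) (x : Fin n → ℝ)
    (hx : StrictMono x) (hxpos : ∀ j, 0 < x j)
    (horthP : ∀ u : Polynomial ℝ, u.degree < (n : WithBot ℕ) →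
      Iw a t (Polynomial.X ^ 2 * ((∏ j, (Polynomial.X - Polynomial.C (x j))) * u)) = 0) :
    2 * (∑ j, 1 / x j) + (a + 1) * (∑ j, 1 / (x j + t)) ≤ n := by
  classical
  set P : Polynomial ℝ := ∏ j, (Polynomial.X - Polynomial.C (x j)) with hPdef
  set Q : Fin n → Polynomial ℝ :=
    fun j => ∏ k ∈ Finset.univ.erase j, (Polynomial.X - Polynomial.C (x k)) with hQdef
  have hinj := hx.injective
  have hne : ∀ {j k : Fin n}, j ≠ k → x j ≠ x k := fun h hc => h (hinj hc)
  have hPQ : ∀ j, P = (Polynomial.X - Polynomial.C (x j)) * Q j :=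
    fun j => (Finset.mul_prod_erase _ _ (Finset.mem_univ j)).symm
  have hQm : ∀ j, (Q j).Monic :=
    fun j => Polynomial.monic_prod_of_monic _ _ fun _ _ => Polynomial.monic_X_sub_C _
  have hdlt : ∀ u : Polynomial ℝ, u.natDegree + 1 ≤ n → u.degree < (n : WithBot ℕ) := by
    intro u h
    refine lt_of_le_of_lt Polynomial.degree_le_natDegree ?_
    exact_mod_cast Nat.lt_of_lt_of_le (Nat.lt_succ_self _) h
  have hQnd : ∀ j, (Q j).natDegree + 1 ≤ n := by
    intro j
    have h1 : (Q j).natDegree ≤ ∑ k ∈ Finset.univ.erase j,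
        (Polynomial.X - Polynomial.C (x k)).natDegree :=
      Polynomial.natDegree_prod_le (Finset.univ.erase j)
        (fun k => Polynomial.X - Polynomial.C (x k))
    have h2 : ∑ k ∈ Finset.univ.erase j, (Polynomial.X - Polynomial.C (x k)).natDegree
        = n - 1 := by
      simp [Polynomial.natDegree_X_sub_C, Finset.card_erase_of_mem]
    have h3 := j.pos
    omega
  set m : Fin n → ℝ := fun j => Iw a t (Polynomial.X ^ 2 * Q j ^ 2) with hmdef
  have hmpos : ∀ j, 0 < m j := by
    intro j
    refine Iw_pos ht a _ (fun y hy => ?_) ?_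
    · simp only [Polynomial.eval_mul, Polynomial.eval_pow, Polynomial.eval_X]
      positivity
    · exact mul_ne_zero (pow_ne_zero _ Polynomial.X_ne_zero) (pow_ne_zero _ (hQm j).ne_zero)
  set A := Iw a t (Polynomial.X * P ^ 2) with hAdef
  set B := Iw (a - 1) t (Polynomial.X ^ 2 * P ^ 2) with hBdef
  set D0 := Iw a t (Polynomial.X * P) with hD0def
  set Dt := Iw (a - 1) t (Polynomial.X ^ 2 * P) with hDtdef
  have hAnn : 0 ≤ A := by
    refine Iw_nonneg ht a _ fun y hy => ?_
    simp only [Polynomial.eval_mul, Polynomial.eval_pow, Polynomial.eval_X]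
    have : (0:ℝ) < y := hy
    positivity
  have hPe0 : ∀ j, P.eval 0 = (0 - x j) * (Q j).eval 0 := fun j => by
    rw [hPQ j]; simp [Polynomial.eval_mul]
  have hPet : ∀ j, P.eval (-t) = (-t - x j) * (Q j).eval (-t) := fun j => by
    rw [hPQ j]; simp [Polynomial.eval_mul]
  have hP0ne : P.eval 0 ≠ 0 := by
    rw [hPdef, Polynomial.eval_prod]
    refine Finset.prod_ne_zero_iff.2 fun j _ => ?_
    simp only [Polynomial.eval_sub, Polynomial.eval_X, Polynomial.eval_C]
    have := hxpos j; intro hcon; linarith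
  have hPtne : P.eval (-t) ≠ 0 := by
    rw [hPdef, Polynomial.eval_prod]
    refine Finset.prod_ne_zero_iff.2 fun j _ => ?_
    simp only [Polynomial.eval_sub, Polynomial.eval_X, Polynomial.eval_C]
    have := hxpos j; intro hcon; linarith
  have hdecomp : ∀ (s : ℝ) (u : Polynomial ℝ),
      u = Polynomial.C (u.eval s) + (Polynomial.X - Polynomial.C s) * (u /ₘ (Polynomial.X - Polynomial.C s)) := by
    intro s u
    conv_lhs => rw [← Polynomial.modByMonic_add_div u (Polynomial.X - Polynomial.C s)]
    rw [Polynomial.modByMonic_X_sub_C_eq_C_eval]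
  have hquotnd : ∀ (s : ℝ) (u : Polynomial ℝ),
      (u /ₘ (Polynomial.X - Polynomial.C s)).natDegree = u.natDegree - 1 := by
    intro s u
    rw [Polynomial.natDegree_divByMonic u (Polynomial.monic_X_sub_C s), Polynomial.natDegree_X_sub_C]
  have hX0 : (Polynomial.X - Polynomial.C (0:ℝ)) = Polynomial.X := by simp
  have hXt : (Polynomial.X - Polynomial.C (-t) : Polynomial ℝ) = Polynomial.X + Polynomial.C t := by
    rw [map_neg, sub_neg_eq_add]
  have hPnd : P.natDegree = n := by
    rw [hPdef, Polynomial.natDegree_prod _ _ fun i _ => Polynomial.X_sub_C_ne_zero (x i)]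
    simp [Polynomial.natDegree_X_sub_C]
  have hPquot : ∀ j : Fin n, ∀ s : ℝ, (P /ₘ (Polynomial.X - Polynomial.C s)).natDegree + 1 ≤ n := by
    intro j s
    rw [hquotnd s P, hPnd]
    have := j.pos; omega
  have hQquot : ∀ (j : Fin n) (s : ℝ), ((Q j) /ₘ (Polynomial.X - Polynomial.C s)).natDegree + 1 ≤ n := by
    intro j s
    have := hQnd j
    rw [hquotnd s (Q j)]
    omega
  have hAD0 : ∀ _ : Fin n, A = P.eval 0 * D0 := by
    intro j
    have hq := hdecomp 0 P
    have hdg := hPquot j 0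
    rw [hX0] at hq hdg
    have hpoly : Polynomial.X * P ^ 2
        = Polynomial.C (P.eval 0) * (Polynomial.X * P)
          + Polynomial.X ^ 2 * (P * (P /ₘ Polynomial.X)) := by
      linear_combination (Polynomial.X * P) * hq
    rw [hAdef, hpoly, Iw_add ht, Iw_Cmul,
      horthP (P /ₘ Polynomial.X) (hdlt _ hdg), ← hD0def]
    ring
  have hBDt : ∀ _ : Fin n, B = P.eval (-t) * Dt := by
    intro j
    have hq := hdecomp (-t) P
    have hdg := hPquot j (-t)
    rw [hXt] at hq hdg
    have hpoly : Polynomial.X ^ 2 * P ^ 2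
        = Polynomial.C (P.eval (-t)) * (Polynomial.X ^ 2 * P)
          + (Polynomial.X + Polynomial.C t) * (Polynomial.X ^ 2 * (P * (P /ₘ (Polynomial.X + Polynomial.C t)))) := by
      linear_combination (Polynomial.X ^ 2 * P) * hq
    rw [hBdef, hpoly, Iw_add ht, Iw_Cmul, Iw_shift ht,
      horthP (P /ₘ (Polynomial.X + Polynomial.C t)) (hdlt _ hdg), ← hDtdef]
    ring
  have hP'0 : Polynomial.derivative P = ∑ k : Fin n,
      (∏ i ∈ Finset.univ.erase k, (Polynomial.X - Polynomial.C (x i)))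
        * Polynomial.derivative (Polynomial.X - Polynomial.C (x k)) :=
    Polynomial.derivative_prod
  have hP' : Polynomial.derivative P = ∑ k, Q k := by
    rw [hP'0]
    refine Finset.sum_congr rfl fun k _ => ?_
    simp
    rfl
  have hcross : ∀ j k : Fin n, k ≠ j → Iw a t (Polynomial.X ^ 2 * (Q k * Q j)) = 0 := by
    intro j k hkj
    have hkmem : k ∈ Finset.univ.erase j := Finset.mem_erase.2 ⟨hkj, Finset.mem_univ k⟩
    have hQj : Q j = (Polynomial.X - Polynomial.C (x k))
        * ∏ i ∈ (Finset.univ.erase j).erase k, (Polynomial.X - Polynomial.C (x i)) :=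
      (Finset.mul_prod_erase _ _ hkmem).symm
    have hpoly : Polynomial.X ^ 2 * (Q k * Q j)
        = Polynomial.X ^ 2 * (P * ∏ i ∈ (Finset.univ.erase j).erase k, (Polynomial.X - Polynomial.C (x i))) := by
      rw [hQj, hPQ k]; ring
    rw [hpoly]
    refine horthP _ (hdlt _ ?_)
    have h1 : (∏ i ∈ (Finset.univ.erase j).erase k, (Polynomial.X - Polynomial.C (x i))).natDegree
        ≤ ∑ i ∈ (Finset.univ.erase j).erase k, (Polynomial.X - Polynomial.C (x i)).natDegree :=
      Polynomial.natDegree_prod_le _ _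
    have h2 : ∑ i ∈ (Finset.univ.erase j).erase k, (Polynomial.X - Polynomial.C (x i)).natDegree
        = ((Finset.univ.erase j).erase k).card := by
      simp [Polynomial.natDegree_X_sub_C]
    have h3 : ((Finset.univ.erase j).erase k).card ≤ (Finset.univ.erase j).card :=
      Finset.card_le_card (Finset.erase_subset _ _)
    have h4 : (Finset.univ.erase j).card = n - 1 := by
      simp [Finset.card_erase_of_mem]
    have h5 := j.pos
    omega
  have hQdernd : ∀ j : Fin n, (Polynomial.derivative (Q j)).natDegree + 1 ≤ n := by
    intro j
    have h1 := Polynomial.natDegree_derivative_le (Q j)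
    have h2 := hQnd j
    omega
  have hF : ∀ j, m j = 2 * A / x j + a * B / (x j + t) := by
    intro j
    have hibp := Iw_ibp ht a (P * Q j)
    rw [Polynomial.derivative_mul] at hibp
    have c1 : Iw a t (Polynomial.X ^ 2 * (P * Q j)) = 0 := horthP (Q j) (hdlt _ (hQnd j))
    have c2 : Iw a t (Polynomial.X ^ 2 * (P * Polynomial.derivative (Q j))) = 0 :=
      horthP _ (hdlt _ (hQdernd j))
    have c3 : Iw a t (Polynomial.X ^ 2 * (Polynomial.derivative P * Q j)) = m j := by
      rw [hP']
      have hpoly : Polynomial.X ^ 2 * ((∑ k, Q k) * Q j)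
          = ∑ k, Polynomial.X ^ 2 * (Q k * Q j) := by
        rw [Finset.sum_mul, Finset.mul_sum]
      rw [hpoly, Iw_sum ht]
      rw [Finset.sum_eq_single j (fun k _ hk => hcross j k hk)
        (fun h => absurd (Finset.mem_univ j) h)]
      rw [hmdef]
      congr 1
      ring
    have c4 : Iw a t (Polynomial.X * (P * Q j)) = (Q j).eval 0 * D0 := by
      have hq := hdecomp 0 (Q j)
      have hdg := hQquot j 0
      rw [hX0] at hq hdg
      have hpoly : Polynomial.X * (P * Q j)
          = Polynomial.C ((Q j).eval 0) * (Polynomial.X * P)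
            + Polynomial.X ^ 2 * (P * (Q j /ₘ Polynomial.X)) := by
        linear_combination (Polynomial.X * P) * hq
      rw [hpoly, Iw_add ht, Iw_Cmul, horthP _ (hdlt _ hdg), ← hD0def]
      ring
    have c5 : Iw (a - 1) t (Polynomial.X ^ 2 * (P * Q j)) = (Q j).eval (-t) * Dt := by
      have hq := hdecomp (-t) (Q j)
      have hdg := hQquot j (-t)
      rw [hXt] at hq hdg
      have hpoly : Polynomial.X ^ 2 * (P * Q j)
          = Polynomial.C ((Q j).eval (-t)) * (Polynomial.X ^ 2 * P)
            + (Polynomial.X + Polynomial.C t) * (Polynomial.X ^ 2 * (P * (Q j /ₘ (Polynomial.X + Polynomial.C t)))) := by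
        linear_combination (Polynomial.X ^ 2 * P) * hq
      rw [hpoly, Iw_add ht, Iw_Cmul, Iw_shift ht, horthP _ (hdlt _ hdg), ← hDtdef]
      ring
    have hsplit : Iw a t (Polynomial.X ^ 2 * (Polynomial.derivative P * Q j + P * Polynomial.derivative (Q j)))
        = Iw a t (Polynomial.X ^ 2 * (Polynomial.derivative P * Q j))
          + Iw a t (Polynomial.X ^ 2 * (P * Polynomial.derivative (Q j))) := by
      rw [← Iw_add ht]
      congr 1
      ring
    rw [hsplit, c1, c2, c3, c4, c5] at hibp
    -- hibp : 2 * ((Q j).eval 0 * D0) + a * ((Q j).eval (-t) * Dt) + (m j + 0) = 0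
    have hxj := (hxpos j).ne'
    have hxjt : x j + t ≠ 0 := by have := hxpos j; positivity
    have h1 : (Q j).eval 0 * D0 = -(A / x j) := by
      have e1 := hAD0 j
      rw [hPe0 j] at e1
      field_simp
      linarith [e1]
    have h2 : (Q j).eval (-t) * Dt = -(B / (x j + t)) := by
      have e1 := hBDt j
      rw [hPet j] at e1
      field_simp
      linarith [e1]
    rw [h1, h2] at hibp
    field_simp at hibp ⊢
    linarith [hibp]
  have hBj : ∀ j, 2 * ((x j * m j + A) / (x j) ^ 2)
      + a * (((x j + t) * m j + B) / (x j + t) ^ 2)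
      + 2 * (∑ k ∈ Finset.univ.erase j, (x j - x k)⁻¹) * m j = m j := by
    intro j
    have hxj0 : x j ≠ 0 := (hxpos j).ne'
    have hxjt0 : x j + t ≠ 0 := by have := hxpos j; positivity
    have hIX3 : Iw a t (Polynomial.X ^ 2 * (Polynomial.X * Q j ^ 2)) = x j * m j := by
      have hpoly : Polynomial.X ^ 2 * (Polynomial.X * Q j ^ 2)
          = Polynomial.X ^ 2 * (P * Q j) + Polynomial.C (x j) * (Polynomial.X ^ 2 * Q j ^ 2) := by
        linear_combination (-(Polynomial.X ^ 2 * Q j)) * hPQ j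
      rw [hpoly, Iw_add ht, Iw_Cmul, horthP (Q j) (hdlt _ (hQnd j)), hmdef]
      ring
    have hterm1 : x j ^ 2 * Iw a t (Polynomial.X * Q j ^ 2) = x j * m j + A := by
      have hpoly : Polynomial.X * P ^ 2
          = Polynomial.C (x j ^ 2) * (Polynomial.X * Q j ^ 2)
            + Polynomial.C (-2 * x j) * (Polynomial.X ^ 2 * Q j ^ 2)
            + Polynomial.C 1 * (Polynomial.X ^ 2 * (Polynomial.X * Q j ^ 2)) := by
        simp only [map_pow, map_mul, map_neg, map_ofNat, map_one]
        linear_combination (Polynomial.X * (P + (Polynomial.X - Polynomial.C (x j)) * Q j)) * hPQ j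
      rw [hAdef, hpoly, Iw_comb ht, hIX3, hmdef]
      ring
    have htermt : (x j + t) ^ 2 * Iw (a - 1) t (Polynomial.X ^ 2 * Q j ^ 2)
        = (x j + t) * m j + B := by
      have hpoly : Polynomial.X ^ 2 * P ^ 2
          = Polynomial.C ((x j + t) ^ 2) * (Polynomial.X ^ 2 * Q j ^ 2)
            + Polynomial.C (-2 * (x j + t)) * ((Polynomial.X + Polynomial.C t) * (Polynomial.X ^ 2 * Q j ^ 2))
            + Polynomial.C 1 * ((Polynomial.X + Polynomial.C t)
                * ((Polynomial.X + Polynomial.C t) * (Polynomial.X ^ 2 * Q j ^ 2))) := by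
        simp only [map_pow, map_mul, map_neg, map_ofNat, map_one, map_add]
        linear_combination (Polynomial.X ^ 2 * (P + (Polynomial.X - Polynomial.C (x j)) * Q j)) * hPQ j
      have hshift2 : Iw a t ((Polynomial.X + Polynomial.C t) * (Polynomial.X ^ 2 * Q j ^ 2))
          = x j * m j + t * m j := by
        have hpoly2 : (Polynomial.X + Polynomial.C t) * (Polynomial.X ^ 2 * Q j ^ 2)
            = Polynomial.X ^ 2 * (Polynomial.X * Q j ^ 2) + Polynomial.C t * (Polynomial.X ^ 2 * Q j ^ 2) := by
          ring
        rw [hpoly2, Iw_add ht, Iw_Cmul, hIX3, hmdef]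
      rw [hBdef, hpoly, Iw_comb ht, Iw_shift ht, Iw_shift ht, hshift2, hmdef]
      ring
    have hsets : ∀ k : Fin n, (Finset.univ.erase j).erase k = (Finset.univ.erase k).erase j := by
      intro k; ext i; simp only [Finset.mem_erase, Finset.mem_univ, and_true]; tauto
    have hIR : ∀ k ∈ Finset.univ.erase j,
        Iw a t (Polynomial.X ^ 2 * (Q j * ∏ i ∈ (Finset.univ.erase j).erase k,
          (Polynomial.X - Polynomial.C (x i)))) = (x j - x k)⁻¹ * m j := by
      intro k hk
      have hkj : k ≠ j := (Finset.mem_erase.1 hk).1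
      have hjk : j ≠ k := hkj.symm
      have hd : x j - x k ≠ 0 := sub_ne_zero.2 (hne hjk)
      have hQjf : Q j = (Polynomial.X - Polynomial.C (x k))
          * ∏ i ∈ (Finset.univ.erase j).erase k, (Polynomial.X - Polynomial.C (x i)) :=
        (Finset.mul_prod_erase _ _ hk).symm
      have hjmem : j ∈ Finset.univ.erase k := Finset.mem_erase.2 ⟨hjk, Finset.mem_univ j⟩
      have hQkf : Q k = (Polynomial.X - Polynomial.C (x j))
          * ∏ i ∈ (Finset.univ.erase j).erase k, (Polynomial.X - Polynomial.C (x i)) := by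
        rw [hsets k]
        exact (Finset.mul_prod_erase _ _ hjmem).symm
      have hpolyR : Polynomial.C (x j - x k) * (Polynomial.X ^ 2 * (Q j * ∏ i ∈ (Finset.univ.erase j).erase k,
            (Polynomial.X - Polynomial.C (x i))))
          = Polynomial.X ^ 2 * Q j ^ 2 - Polynomial.X ^ 2 * (Q k * Q j) := by
        simp only [map_sub]
        linear_combination (-(Polynomial.X ^ 2 * Q j)) * hQjf + (Polynomial.X ^ 2 * Q j) * hQkf
      have h2 := congrArg (Iw a t) hpolyR
      rw [Iw_Cmul, Iw_sub ht, hcross j k hkj] at h2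
      have hmj : Iw a t (Polynomial.X ^ 2 * Q j ^ 2) = m j := rfl
      rw [hmj] at h2
      field_simp at h2 ⊢
      linarith [h2]
    have hQ'j : Polynomial.derivative (Q j) = ∑ k ∈ Finset.univ.erase j,
        ∏ i ∈ (Finset.univ.erase j).erase k, (Polynomial.X - Polynomial.C (x i)) := by
      have h0 : Polynomial.derivative (Q j) = ∑ k ∈ Finset.univ.erase j,
          (∏ i ∈ (Finset.univ.erase j).erase k, (Polynomial.X - Polynomial.C (x i)))
            * Polynomial.derivative (Polynomial.X - Polynomial.C (x k)) := Polynomial.derivative_prod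
      rw [h0]
      refine Finset.sum_congr rfl fun k _ => ?_
      simp
    have hterm3 : Iw a t (Polynomial.X ^ 2 * Polynomial.derivative (Q j ^ 2))
        = 2 * (∑ k ∈ Finset.univ.erase j, (x j - x k)⁻¹) * m j := by
      have hd2 : Polynomial.X ^ 2 * Polynomial.derivative (Q j ^ 2)
          = ∑ k ∈ Finset.univ.erase j, Polynomial.C 2 * (Polynomial.X ^ 2 * (Q j * ∏ i ∈ (Finset.univ.erase j).erase k,
              (Polynomial.X - Polynomial.C (x i)))) := by
        rw [Polynomial.derivative_pow, hQ'j, pow_one, Finset.mul_sum, Finset.mul_sum]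
        refine Finset.sum_congr rfl fun k _ => ?_
        simp only [Nat.cast_ofNat]
        ring
      rw [hd2, Iw_sum ht]
      have : ∀ k ∈ Finset.univ.erase j, Iw a t (Polynomial.C 2 * (Polynomial.X ^ 2 * (Q j * ∏ i ∈ (Finset.univ.erase j).erase k,
          (Polynomial.X - Polynomial.C (x i))))) = 2 * ((x j - x k)⁻¹ * m j) := by
        intro k hk
        rw [Iw_Cmul, hIR k hk]
      rw [Finset.sum_congr rfl this, ← Finset.mul_sum, ← Finset.sum_mul, mul_assoc]
    have hibp := Iw_ibp ht a (Q j ^ 2)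
    rw [hterm3] at hibp
    have hmj : Iw a t (Polynomial.X ^ 2 * Q j ^ 2) = m j := rfl
    rw [hmj] at hibp
    have e1 : Iw a t (Polynomial.X * Q j ^ 2) = (x j * m j + A) / x j ^ 2 := by
      rw [eq_div_iff (pow_ne_zero 2 hxj0)]
      linarith [hterm1]
    have e2 : Iw (a - 1) t (Polynomial.X ^ 2 * Q j ^ 2) = ((x j + t) * m j + B) / (x j + t) ^ 2 := by
      rw [eq_div_iff (pow_ne_zero 2 hxjt0)]
      linarith [htermt]
    rw [e1, e2] at hibp
    linarith [hibp]
  clear_value A B D0 Dt m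
  have hnorm : ∀ j, 2 / x j + (2 * A / (x j) ^ 2 + a * B / (x j + t) ^ 2) / m j
      + a / (x j + t) + 2 * (∑ k ∈ Finset.univ.erase j, (x j - x k)⁻¹) = 1 := by
    intro j
    have hxj0 : x j ≠ 0 := (hxpos j).ne'
    have hxjt0 : x j + t ≠ 0 := by have := hxpos j; positivity
    have hm0 : m j ≠ 0 := (hmpos j).ne'
    have h := hBj j
    set Sj := ∑ k ∈ Finset.univ.erase j, (x j - x k)⁻¹ with hSjdef
    refine mul_right_cancel₀ hm0 ?_
    have hEm : (2 * A / (x j) ^ 2 + a * B / (x j + t) ^ 2) / m j * m j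
        = 2 * A / (x j) ^ 2 + a * B / (x j + t) ^ 2 := div_mul_cancel₀ _ hm0
    have expand : (2 / x j + (2 * A / (x j) ^ 2 + a * B / (x j + t) ^ 2) / m j
        + a / (x j + t) + 2 * Sj) * m j
        = 2 / x j * m j + (2 * A / (x j) ^ 2 + a * B / (x j + t) ^ 2) / m j * m j
          + a / (x j + t) * m j + 2 * Sj * m j := by ring
    rw [expand, hEm]
    have d1 : (x j * m j + A) / x j ^ 2 = m j / x j + A / x j ^ 2 := by
      field_simp
    have d2 : ((x j + t) * m j + B) / (x j + t) ^ 2 = m j / (x j + t) + B / (x j + t) ^ 2 := by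
      field_simp
    rw [d1, d2] at h
    linear_combination h
  have hanti : ∑ j, ∑ k ∈ Finset.univ.erase j, (x j - x k)⁻¹ = 0 := by
    have hswap : ∑ j, ∑ k ∈ Finset.univ.erase j, (x j - x k)⁻¹
        = ∑ k, ∑ j ∈ Finset.univ.erase k, (x j - x k)⁻¹ := by
      refine Finset.sum_comm' ?_
      intro j k
      simp only [Finset.mem_univ, true_and, and_true, Finset.mem_erase]
      exact ne_comm
    have hneg : ∑ k : Fin n, ∑ j ∈ Finset.univ.erase k, (x j - x k)⁻¹
        = -∑ j, ∑ k ∈ Finset.univ.erase j, (x j - x k)⁻¹ := by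
      rw [← Finset.sum_neg_distrib]
      refine Finset.sum_congr rfl fun j _ => ?_
      rw [← Finset.sum_neg_distrib]
      refine Finset.sum_congr rfl fun k _ => ?_
      rw [← inv_neg, neg_sub]
    rw [hneg] at hswap
    linarith
  have hsum : ∑ j, (2 / x j + (2 * A / (x j) ^ 2 + a * B / (x j + t) ^ 2) / m j
      + a / (x j + t)) = (n : ℝ) := by
    have h1 : ∑ j, (2 / x j + (2 * A / (x j) ^ 2 + a * B / (x j + t) ^ 2) / m j
        + a / (x j + t) + 2 * (∑ k ∈ Finset.univ.erase j, (x j - x k)⁻¹))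
        = ∑ _j : Fin n, (1:ℝ) := Finset.sum_congr rfl fun j _ => hnorm j
    rw [Finset.sum_add_distrib] at h1
    have h2 : ∑ j, 2 * (∑ k ∈ Finset.univ.erase j, (x j - x k)⁻¹)
        = 2 * ∑ j, ∑ k ∈ Finset.univ.erase j, (x j - x k)⁻¹ := by
      rw [Finset.mul_sum]
    rw [h2, hanti, mul_zero, add_zero] at h1
    rw [h1, Finset.sum_const, Finset.card_univ, Fintype.card_fin, nsmul_eq_mul, mul_one]
  have hEj : ∀ j, 1 / (x j + t) ≤ (2 * A / (x j) ^ 2 + a * B / (x j + t) ^ 2) / m j := by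
    intro j
    have hxj0 : x j ≠ 0 := (hxpos j).ne'
    have hxjt : (0:ℝ) < x j + t := by have := hxpos j; positivity
    have e : (1 / (x j + t)) * m j = 2 * A / (x j * (x j + t)) + a * B / (x j + t) ^ 2 := by
      rw [hF j]
      field_simp
    have hle : 2 * A / (x j * (x j + t)) ≤ 2 * A / (x j ^ 2) := by
      have h1 : (0:ℝ) < x j ^ 2 := by positivity
      have h2 : x j ^ 2 ≤ x j * (x j + t) := by nlinarith [hxpos j, ht]
      have h3 := mul_le_mul_of_nonneg_left (one_div_le_one_div_of_le h1 h2)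
        (by linarith : (0:ℝ) ≤ 2 * A)
      rw [div_eq_mul_one_div (2*A), div_eq_mul_one_div (2*A)]
      exact h3
    have key : (1 / (x j + t)) * m j ≤ 2 * A / (x j) ^ 2 + a * B / (x j + t) ^ 2 := by
      rw [e]; linarith
    have h4 : (1 / (x j + t)) = ((1 / (x j + t)) * m j) / (m j) := by
      rw [mul_div_assoc, div_self (hmpos j).ne', mul_one]
    rw [h4]
    exact (div_le_div_iff_of_pos_right (hmpos j)).2 key
  have hsumle : ∑ j, (2 * (1 / x j) + (a + 1) * (1 / (x j + t)))
      ≤ ∑ j, (2 / x j + (2 * A / (x j) ^ 2 + a * B / (x j + t) ^ 2) / m j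
        + a / (x j + t)) := by
    refine Finset.sum_le_sum fun j _ => ?_
    have := hEj j
    have h5 : (a+1) * (1/(x j + t)) = a / (x j + t) + 1/(x j+t) := by ring
    rw [h5]
    have h6 : 2 * (1 / x j) = 2 / x j := by ring
    linarith
  have hexpand : ∑ j, (2 * (1 / x j) + (a + 1) * (1 / (x j + t)))
      = 2 * (∑ j, 1 / x j) + (a + 1) * (∑ j, 1 / (x j + t)) := by
    rw [Finset.sum_add_distrib, ← Finset.mul_sum, ← Finset.mul_sum]
  linarith [hsumle, hsum, hexpand.symm.le, hexpand.le]

end DLZRB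

open MeasureTheory Polynomial Finset

/-- Bounds on reciprocal sums of the zeros of the `n`-th orthogonal polynomial
for the deformed Laguerre weight `x²(x+t)^a e^{-x}` on `(0,∞)`:
`∑ 1/x_{j,n} ≤ n/2` and `∑ 1/(x_{j,n}+t) ≤ n/(a+3)`. -/
theorem deformed_laguerre_zero_reciprocal_bounds
    (a t : ℝ) (ha : -1 < a) (ht : 0 < t) (n : ℕ)
    (p : Polynomial ℝ) (hdeg : p.degree = n)
    (horth : ∀ q : Polynomial ℝ, q.degree < n →
      (∫ x in Set.Ioi (0 : ℝ),
        (x ^ 2 * (x + t) ^ a * Real.exp (-x)) * p.eval x * q.eval x) = 0)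
    (x : Fin n → ℝ) (hx : StrictMono x) (hxpos : ∀ j, 0 < x j)
    (hroot : ∀ j, p.eval (x j) = 0) :
    (∑ j, 1 / x j) ≤ (n : ℝ) / 2 ∧ (∑ j, 1 / (x j + t)) ≤ (n : ℝ) / (a + 3) := by
  classical
  have hinj := hx.injective
  set P : Polynomial ℝ := ∏ j, (Polynomial.X - Polynomial.C (x j)) with hPdef
  have hdvd : P ∣ p := by
    refine Finset.prod_dvd_of_coprime ?_ fun j _ => (Polynomial.dvd_iff_isRoot).2 (hroot j)
    exact (Polynomial.pairwise_coprime_X_sub_C hinj).set_pairwise _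
  obtain ⟨g, hpg⟩ := hdvd
  have hPm : P.Monic := Polynomial.monic_prod_of_monic _ _ fun _ _ => Polynomial.monic_X_sub_C _
  have hp0 : p ≠ 0 := by
    intro h
    rw [h, Polynomial.degree_zero] at hdeg
    exact absurd hdeg.symm (by simp)
  have hg0 : g ≠ 0 := by rintro rfl; rw [mul_zero] at hpg; exact hp0 hpg
  have hPnd : P.natDegree = n := by
    rw [hPdef, Polynomial.natDegree_prod _ _ fun i _ => Polynomial.X_sub_C_ne_zero (x i)]
    simp [Polynomial.natDegree_X_sub_C]
  have hpnd : p.natDegree = n := Polynomial.natDegree_eq_of_degree_eq_some hdeg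
  have hgnd : g.natDegree = 0 := by
    have h1 := Polynomial.natDegree_mul hPm.ne_zero hg0
    rw [← hpg, hpnd, hPnd] at h1
    omega
  have hgc : g = Polynomial.C (g.coeff 0) :=
    Polynomial.eq_C_of_natDegree_le_zero (le_of_eq hgnd)
  set c := g.coeff 0 with hcdef
  have hc0 : c ≠ 0 := by
    intro h
    rw [hgc, h, map_zero, mul_zero] at hpg
    exact hp0 hpg
  have hpc : ∀ y, p.eval y = c * P.eval y := by
    intro y
    rw [hpg, hgc]
    simp [Polynomial.eval_mul, mul_comm]
  have horthP : ∀ u : Polynomial ℝ, u.degree < (n : WithBot ℕ) →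
      DLZRB.Iw a t (Polynomial.X ^ 2 * (P * u)) = 0 := by
    intro u hu
    have h0 := horth u hu
    rw [show (fun y : ℝ => (y ^ 2 * (y + t) ^ a * Real.exp (-y)) * p.eval y * u.eval y)
        = fun y : ℝ => c • DLZRB.wf a t (Polynomial.X ^ 2 * (P * u)) y from funext fun y => by
      rw [hpc y]
      unfold DLZRB.wf
      simp only [Polynomial.eval_mul, Polynomial.eval_pow, Polynomial.eval_X, smul_eq_mul]
      ring] at h0
    rw [MeasureTheory.integral_smul] at h0
    have h1 := (smul_eq_zero.mp h0).resolve_left hc0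
    exact h1
  have hcore := DLZRB.core a t ha ht n x hx hxpos horthP
  have hS2nn : (0:ℝ) ≤ ∑ j, 1 / (x j + t) := by
    refine Finset.sum_nonneg fun j _ => ?_
    have := hxpos j
    positivity
  have hS2S1 : (∑ j, 1 / (x j + t)) ≤ ∑ j, 1 / x j := by
    refine Finset.sum_le_sum fun j _ => ?_
    exact one_div_le_one_div_of_le (hxpos j) (by linarith)
  constructor
  · have h1 : (0:ℝ) ≤ (a + 1) * ∑ j, 1 / (x j + t) := mul_nonneg (by linarith) hS2nn
    linarith
  · rw [le_div_iff₀ (by linarith : (0:ℝ) < a + 3)]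
    linarith
end

section
/- Let $\nu(s)$ satisfy $s^2(\ddot\nu)^2-(a+2)^2(\dot\nu)^2+\dot\nu(4\dot\nu-1)(s\dot\nu-\nu)+\tfrac12 a(a+2)\dot\nu-\tfrac1{16}a^2=0$ and admit a formal power-series solution $\nu(s)=\sum_{j\geq 0}c_j s^j$ with $c_0=0$. Then necessarily $c_1=\frac{a}{4(a+2)}$, and $c_2\in\{-\frac{a}{8(a+3)(a+2)^2(a+1)},\,0\}$. -/
open Filter


/-- For a power-series solution `ν(s) = ∑ c_j s^j` with `c_0 = 0` of the
Jimbo–Miwa–Okamoto σ-form of Painlevé III′, necessarily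
`c_1 = a/(4(a+2))` and `c_2 ∈ {-a/(8(a+3)(a+2)²(a+1)), 0}`. -/
theorem sigma_PIII_series_coefficients
    (a : ℝ) (ha1 : a ≠ -1) (ha2 : a ≠ -2) (ha3 : a ≠ -3)
    (c : ℕ → ℝ) (ν : ℝ → ℝ) (r : ℝ) (hr : 0 < r)
    (hsum : ∀ s : ℝ, |s| < r → HasSum (fun j => c j * s ^ j) (ν s))
    (hc0 : c 0 = 0)
    (hode : ∀ s : ℝ, |s| < r →
      s ^ 2 * (deriv (deriv ν) s) ^ 2 - (a + 2) ^ 2 * (deriv ν s) ^ 2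
        + deriv ν s * (4 * deriv ν s - 1) * (s * deriv ν s - ν s)
        + (1 / 2) * a * (a + 2) * deriv ν s - a ^ 2 / 16 = 0) :
    c 1 = a / (4 * (a + 2)) ∧
      (c 2 = -a / (8 * (a + 3) * (a + 2) ^ 2 * (a + 1)) ∨ c 2 = 0) := by
  have hν0 : ν 0 = 0 := by
    have h1 := hsum 0 (by simpa using hr)
    have h2 : HasSum (fun j => c j * (0:ℝ) ^ j) (c 0) := by
      convert hasSum_single (f := fun j => c j * (0:ℝ)^j) 0
        (fun b hb => by simp [zero_pow hb]) using 1
      simp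
    rw [h1.unique h2, hc0]
  set p : FormalMultilinearSeries ℝ ℝ ℝ := FormalMultilinearSeries.ofScalars ℝ c with hp_def
  have hhalf : |r/2| < r := by rw [abs_of_pos (by linarith)]; linarith
  have hsummable : Summable (fun n => c n * (r/2)^n) := (hsum (r/2) hhalf).summable
  have htend : Tendsto (fun n => |c n * (r/2)^n|) atTop (nhds 0) := by
    simpa using hsummable.tendsto_atTop_zero.abs
  obtain ⟨C, hC⟩ := htend.bddAbove_range
  have hrad : ENNReal.ofReal (r/2) ≤ p.radius := by
    rw [ENNReal.ofReal]
    apply p.le_radius_of_bound C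
    intro n
    have hco : ((Real.toNNReal (r/2) : ℝ)) = r/2 := Real.coe_toNNReal _ (by linarith)
    rw [hco, hp_def, FormalMultilinearSeries.ofScalars_norm, Real.norm_eq_abs,
      ← abs_of_nonneg (pow_nonneg (by linarith : (0:ℝ) ≤ r/2) n), ← abs_mul]
    exact hC ⟨n, rfl⟩
  have hball : HasFPowerSeriesOnBall ν p 0 (ENNReal.ofReal (r/2)) := by
    refine ⟨hrad, by simp; linarith, ?_⟩
    intro y hy
    rw [Metric.emetric_ball, Metric.mem_ball, dist_zero_right, Real.norm_eq_abs] at hy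
    simp only [hp_def, FormalMultilinearSeries.ofScalars_apply_eq, smul_eq_mul, zero_add]
    exact hsum y (by linarith)
  have key : ∀ n : ℕ, iteratedDeriv n ν 0 = (n.factorial : ℝ) * c n := by
    intro n
    have h := hball.factorial_smul (1:ℝ) n
    rw [iteratedDeriv_eq_iteratedFDeriv, ← h, hp_def,
      FormalMultilinearSeries.ofScalars_apply_eq]
    simp [smul_eq_mul]
  have hd1 : deriv ν 0 = c 1 := by simpa [iteratedDeriv_one] using key 1
  have hd2 : deriv (deriv ν) 0 = 2 * c 2 := by
    have := key 2
    rw [iteratedDeriv_succ, iteratedDeriv_one] at this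
    simpa using this
  have hd3 : deriv (deriv (deriv ν)) 0 = 6 * c 3 := by
    have := key 3
    rw [iteratedDeriv_succ, iteratedDeriv_succ, iteratedDeriv_one] at this
    norm_num at this
    simpa using this
  -- analyticity on the ball
  have hAn : AnalyticOnNhd ℝ ν (Metric.ball (0:ℝ) (r/2)) := by
    have := hball.analyticOnNhd
    rwa [Metric.emetric_ball] at this
  have hAn1 : AnalyticOnNhd ℝ (deriv ν) (Metric.ball (0:ℝ) (r/2)) := hAn.deriv
  have hAn2 : AnalyticOnNhd ℝ (deriv (deriv ν)) (Metric.ball (0:ℝ) (r/2)) := hAn1.deriv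
  have hAn3 : AnalyticOnNhd ℝ (deriv (deriv (deriv ν))) (Metric.ball (0:ℝ) (r/2)) := hAn2.deriv
  have h0mem : (0:ℝ) ∈ Metric.ball (0:ℝ) (r/2) := by
    simp [Metric.mem_ball]; linarith
  have H0 : ∀ s ∈ Metric.ball (0:ℝ) (r/2), HasDerivAt ν (deriv ν s) s :=
    fun s hs => ((hAn s hs).differentiableAt).hasDerivAt
  have H1 : ∀ s ∈ Metric.ball (0:ℝ) (r/2), HasDerivAt (deriv ν) (deriv (deriv ν) s) s :=
    fun s hs => ((hAn1 s hs).differentiableAt).hasDerivAt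
  have H2 : ∀ s ∈ Metric.ball (0:ℝ) (r/2),
      HasDerivAt (deriv (deriv ν)) (deriv (deriv (deriv ν)) s) s :=
    fun s hs => ((hAn2 s hs).differentiableAt).hasDerivAt
  have H3 : HasDerivAt (deriv (deriv (deriv ν)))
      (deriv (deriv (deriv (deriv ν))) 0) 0 :=
    ((hAn3 0 h0mem).differentiableAt).hasDerivAt
  -- c1 equation from the ODE at s = 0
  have heq0 := hode 0 (by simpa using hr)
  have hc1sub : (a + 2) * c 1 - a / 4 = 0 := by
    have hsq : ((a + 2) * c 1 - a / 4) ^ 2 = 0 := by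
      rw [hν0, hd1] at heq0
      linear_combination -heq0
    exact (pow_eq_zero_iff two_ne_zero).mp hsq
  have ha2' : a + 2 ≠ 0 := fun h => ha2 (by linarith)
  have ha1' : a + 1 ≠ 0 := fun h => ha1 (by linarith)
  have ha3' : a + 3 ≠ 0 := fun h => ha3 (by linarith)
  have hc1 : c 1 = a / (4 * (a + 2)) := by
    field_simp
    linarith
  refine ⟨hc1, ?_⟩
  -- second-order information
  set F' : ℝ → ℝ := fun t =>
      2 * t * (deriv (deriv ν) t) ^ 2
      + t ^ 2 * (2 * deriv (deriv ν) t * deriv (deriv (deriv ν)) t)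
      - (a + 2) ^ 2 * (2 * deriv ν t * deriv (deriv ν) t)
      + (deriv (deriv ν) t * (4 * deriv ν t - 1) + deriv ν t * (4 * deriv (deriv ν) t))
          * (t * deriv ν t - ν t)
      + deriv ν t * (4 * deriv ν t - 1) * (t * deriv (deriv ν) t)
      + 1 / 2 * a * (a + 2) * deriv (deriv ν) t with hF'def
  have hFd : ∀ s ∈ Metric.ball (0:ℝ) (r/2),
      HasDerivAt (fun t => t ^ 2 * (deriv (deriv ν) t) ^ 2 - (a + 2) ^ 2 * (deriv ν t) ^ 2
        + deriv ν t * (4 * deriv ν t - 1) * (t * deriv ν t - ν t)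
        + 1 / 2 * a * (a + 2) * deriv ν t - a ^ 2 / 16) (F' s) s := by
    intro s hs
    have h0 := H0 s hs
    have h1 := H1 s hs
    have h2 := H2 s hs
    have hcomb := (((((hasDerivAt_pow 2 s).mul (h2.pow 2)).sub
        ((h1.pow 2).const_mul ((a + 2) ^ 2))).add
        ((h1.mul ((h1.const_mul 4).sub_const 1)).mul
          (((hasDerivAt_id s).mul h1).sub h0))).add
        (h1.const_mul (1 / 2 * a * (a + 2)))).sub_const (a ^ 2 / 16)
    refine hcomb.congr_deriv ?_
    simp only [hF'def, id_eq, Pi.mul_apply, Pi.sub_apply, Pi.pow_apply]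
    ring
  -- F (LHS of the ODE) vanishes near 0, hence so does F'
  have hball0 : Metric.ball (0:ℝ) (r/2) ∈ nhds (0:ℝ) := Metric.ball_mem_nhds 0 (by linarith)
  have hF0 : (fun t => t ^ 2 * (deriv (deriv ν) t) ^ 2 - (a + 2) ^ 2 * (deriv ν t) ^ 2
        + deriv ν t * (4 * deriv ν t - 1) * (t * deriv ν t - ν t)
        + 1 / 2 * a * (a + 2) * deriv ν t - a ^ 2 / 16) =ᶠ[nhds (0:ℝ)] (fun _ => 0) := by
    filter_upwards [hball0] with t ht
    refine hode t ?_
    rw [Metric.mem_ball, dist_zero_right, Real.norm_eq_abs] at ht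
    linarith
  have hderivF : deriv (fun t => t ^ 2 * (deriv (deriv ν) t) ^ 2 - (a + 2) ^ 2 * (deriv ν t) ^ 2
        + deriv ν t * (4 * deriv ν t - 1) * (t * deriv ν t - ν t)
        + 1 / 2 * a * (a + 2) * deriv ν t - a ^ 2 / 16) =ᶠ[nhds (0:ℝ)] F' := by
    filter_upwards [hball0] with t ht
    exact (hFd t ht).deriv
  have hF'0 : F' =ᶠ[nhds (0:ℝ)] (fun _ => 0) := by
    refine hderivF.symm.trans (hF0.deriv.trans ?_)
    filter_upwards with t
    simp
  have hder0 : deriv F' 0 = 0 := by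
    rw [hF'0.deriv_eq]
    simp
  -- compute the derivative of F' at 0 explicitly
  have h0 := H0 0 h0mem
  have h1 := H1 0 h0mem
  have h2 := H2 0 h0mem
  have hasF' : HasDerivAt F'
      (2 * (deriv (deriv ν) 0) ^ 2
        - 2 * (a + 2) ^ 2 * ((deriv (deriv ν) 0) ^ 2 + deriv ν 0 * deriv (deriv (deriv ν)) 0)
        - ν 0 * (deriv (deriv (deriv ν)) 0 * (4 * deriv ν 0 - 1)
            + 8 * (deriv (deriv ν) 0) ^ 2 + 4 * deriv ν 0 * deriv (deriv (deriv ν)) 0)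
        + deriv ν 0 * (4 * deriv ν 0 - 1) * deriv (deriv ν) 0
        + 1 / 2 * a * (a + 2) * deriv (deriv (deriv ν)) 0) 0 := by
    rw [hF'def]
    have hcomb2 := ((((((((hasDerivAt_id (0:ℝ)).const_mul 2).mul (h2.pow 2)).add
        ((hasDerivAt_pow 2 (0:ℝ)).mul ((h2.const_mul 2).mul H3))).sub
        (((h1.const_mul 2).mul h2).const_mul ((a + 2) ^ 2))).add
        (((h2.mul ((h1.const_mul 4).sub_const 1)).add (h1.mul (h2.const_mul 4))).mul
          (((hasDerivAt_id (0:ℝ)).mul h1).sub h0))).add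
        ((h1.mul ((h1.const_mul 4).sub_const 1)).mul ((hasDerivAt_id (0:ℝ)).mul h2))).add
        (h2.const_mul (1 / 2 * a * (a + 2))))
    refine hcomb2.congr_deriv ?_
    simp only [id_eq, Pi.mul_apply, Pi.sub_apply, Pi.pow_apply]
    ring
  have hEzero : 2 * (deriv (deriv ν) 0) ^ 2
        - 2 * (a + 2) ^ 2 * ((deriv (deriv ν) 0) ^ 2 + deriv ν 0 * deriv (deriv (deriv ν)) 0)
        - ν 0 * (deriv (deriv (deriv ν)) 0 * (4 * deriv ν 0 - 1)
            + 8 * (deriv (deriv ν) 0) ^ 2 + 4 * deriv ν 0 * deriv (deriv (deriv ν)) 0)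
        + deriv ν 0 * (4 * deriv ν 0 - 1) * deriv (deriv ν) 0
        + 1 / 2 * a * (a + 2) * deriv (deriv (deriv ν)) 0 = 0 := by
    rw [← hasF'.deriv, hder0]
  rw [hν0, hd1, hd2, hd3, hc1] at hEzero
  have key2 : c 2 * (8 * (a + 3) * (a + 2) ^ 2 * (a + 1) * c 2 + a) = 0 := by
    field_simp at hEzero
    have key2' : (128 * (a + 2)) * (c 2 * (8 * (a + 3) * (a + 2) ^ 2 * (a + 1) * c 2 + a)) = 0 := by
      linear_combination -16 * (a + 2) * hEzero
    exact (mul_eq_zero.mp key2').resolve_left (by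
      exact mul_ne_zero (by norm_num) ha2')
  rcases mul_eq_zero.mp key2 with h | h
  · exact Or.inr h
  · left
    have hden : (8:ℝ) * (a + 3) * (a + 2) ^ 2 * (a + 1) ≠ 0 := by
      refine mul_ne_zero (mul_ne_zero (mul_ne_zero ?_ ha3') (pow_ne_zero _ ha2')) ha1'
      norm_num
    field_simp
    linarith
end

section
/- Any formal algebraic leading behaviour $\nu(s)\sim d\,s^{\beta}$ as $s\to\infty$ with $0<\beta<1$ solving $s^2(\ddot\nu)^2-(a+2)^2(\dot\nu)^2+\dot\nu(4\dot\nu-1)(s\dot\nu-\nu)+\tfrac12 a(a+2)\dot\nu-\tfrac1{16}a^2=0$ must have $\beta=\tfrac12$ and $d=\pm\tfrac a2$. -/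
open Filter Asymptotics Topology

private lemma tendsto_of_isEquivalent_rpow {f : ℝ → ℝ} {c γ δ : ℝ} (hc : c ≠ 0)
    (hδ : γ + δ = 0)
    (h : f ~[atTop] fun s => c * s ^ γ) :
    Tendsto (fun s => f s * s ^ δ) atTop (𝓝 c) := by
  have hne : ∀ᶠ s : ℝ in atTop, c * s ^ γ ≠ 0 := by
    filter_upwards [eventually_gt_atTop 0] with s hs
    exact mul_ne_zero hc (ne_of_gt (Real.rpow_pos_of_pos hs γ))
  have h1 := (Asymptotics.isEquivalent_iff_tendsto_one hne).mp h
  have h2 : Tendsto (fun s => c * (f s / (c * s ^ γ))) atTop (𝓝 (c * 1)) := h1.const_mul c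
  rw [mul_one] at h2
  refine h2.congr' ?_
  filter_upwards [eventually_gt_atTop 0] with s hs
  have hsγ : (0:ℝ) < s ^ γ := Real.rpow_pos_of_pos hs γ
  have hδ' : δ = -γ := by linarith
  rw [hδ', Real.rpow_neg hs.le]
  field_simp

private lemma tendsto_rpow_zero_of_neg {e : ℝ} (he : e < 0) :
    Tendsto (fun s : ℝ => s ^ e) atTop (𝓝 0) := by
  have := tendsto_rpow_neg_atTop (y := -e) (by linarith)
  simpa using this

/-- Any algebraic leading behaviour `ν(s) ~ d s^β` as `s → ∞` with `0 < β < 1`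
solving the σ-Painlevé III′ equation must have `β = 1/2` and `d = ±a/2`. -/
theorem sigma_PIII_leading_behaviour
    (a d β : ℝ) (ha : a ≠ 0) (hd : d ≠ 0) (hβ0 : 0 < β) (hβ1 : β < 1)
    (ν : ℝ → ℝ)
    (h0 : ν ~[atTop] fun s => d * s ^ β)
    (h1 : deriv ν ~[atTop] fun s => d * β * s ^ (β - 1))
    (h2 : deriv (deriv ν) ~[atTop] fun s => d * β * (β - 1) * s ^ (β - 2))
    (hode : ∀ᶠ s in atTop,
      s ^ 2 * (deriv (deriv ν) s) ^ 2 - (a + 2) ^ 2 * (deriv ν s) ^ 2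
        + deriv ν s * (4 * deriv ν s - 1) * (s * deriv ν s - ν s)
        + (1 / 2) * a * (a + 2) * deriv ν s - a ^ 2 / 16 = 0) :
    β = 1 / 2 ∧ (d = a / 2 ∨ d = -(a / 2)) := by
  have hdβ : d * β ≠ 0 := mul_ne_zero hd (ne_of_gt hβ0)
  have hA : Tendsto (fun s => ν s * s ^ (-β)) atTop (𝓝 d) :=
    tendsto_of_isEquivalent_rpow hd (by ring) h0
  have hB : Tendsto (fun s => deriv ν s * s ^ (1 - β)) atTop (𝓝 (d * β)) :=
    tendsto_of_isEquivalent_rpow hdβ (by ring) h1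
  have hC : Tendsto (fun s => deriv (deriv ν) s * s ^ (2 - β)) atTop
      (𝓝 (d * β * (β - 1))) :=
    tendsto_of_isEquivalent_rpow (mul_ne_zero hdβ (by intro h; linarith [sub_eq_zero.mp h]))
      (by ring) h2
  -- ν' → 0
  have hu0 : Tendsto (deriv ν) atTop (𝓝 0) := by
    have h := hB.mul (tendsto_rpow_zero_of_neg (e := β - 1) (by linarith))
    rw [mul_zero] at h
    refine h.congr' ?_
    filter_upwards [eventually_gt_atTop 0] with s hs
    rw [mul_assoc, ← Real.rpow_add hs, show (1 - β) + (β - 1) = 0 by ring,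
      Real.rpow_zero, mul_one]
  -- s·ν'' → 0
  have hsw : Tendsto (fun s => s * deriv (deriv ν) s) atTop (𝓝 0) := by
    have h := hC.mul (tendsto_rpow_zero_of_neg (e := β - 1) (by linarith))
    rw [mul_zero] at h
    refine h.congr' ?_
    filter_upwards [eventually_gt_atTop 0] with s hs
    rw [mul_assoc, ← Real.rpow_add hs, show (2 - β) + (β - 1) = 1 by ring,
      Real.rpow_one, mul_comm]
  -- (s ν' - ν)·s^{-β} → dβ - d
  have hD : Tendsto (fun s => (s * deriv ν s - ν s) * s ^ (-β)) atTop (𝓝 (d * β - d)) := by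
    have h := hB.sub hA
    refine h.congr' ?_
    filter_upwards [eventually_gt_atTop 0] with s hs
    rw [show (1 - β) = 1 + (-β) by ring, Real.rpow_add hs, Real.rpow_one]
    ring
  have h4u : Tendsto (fun s => 4 * deriv ν s - 1) atTop (𝓝 (4 * 0 - 1)) :=
    (hu0.const_mul 4).sub tendsto_const_nhds
  -- T·s^{1-2β} → d²β(1-β)
  have hT : Tendsto
      (fun s => deriv ν s * (4 * deriv ν s - 1) * (s * deriv ν s - ν s) * s ^ (1 - 2 * β))
      atTop (𝓝 (d * β * (4 * 0 - 1) * (d * β - d))) := by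
    have h := (hB.mul h4u).mul hD
    refine h.congr' ?_
    filter_upwards [eventually_gt_atTop 0] with s hs
    rw [show (1 : ℝ) - 2 * β = (1 - β) + (-β) by ring, Real.rpow_add hs]
    ring
  -- remainder → 0
  have hg : Tendsto (fun s => s ^ 2 * (deriv (deriv ν) s) ^ 2
      - (a + 2) ^ 2 * (deriv ν s) ^ 2 + (1 / 2) * a * (a + 2) * deriv ν s) atTop (𝓝 0) := by
    have h1' : Tendsto (fun s => (s * deriv (deriv ν) s) ^ 2) atTop (𝓝 0) := by
      simpa using hsw.pow 2
    have h2' : Tendsto (fun s => (deriv ν s) ^ 2) atTop (𝓝 0) := by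
      simpa using hu0.pow 2
    have h := (h1'.sub (h2'.const_mul ((a + 2) ^ 2))).add (hu0.const_mul ((1 / 2) * a * (a + 2)))
    simp only [mul_zero, sub_zero, add_zero, zero_sub, neg_zero, zero_add] at h
    refine h.congr fun s => by ring
  -- T → a²/16
  have hTa : Tendsto (fun s => deriv ν s * (4 * deriv ν s - 1) * (s * deriv ν s - ν s))
      atTop (𝓝 (a ^ 2 / 16)) := by
    have h : Tendsto (fun s => a ^ 2 / 16 - (s ^ 2 * (deriv (deriv ν) s) ^ 2
        - (a + 2) ^ 2 * (deriv ν s) ^ 2 + (1 / 2) * a * (a + 2) * deriv ν s)) atTop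
        (𝓝 (a ^ 2 / 16 - 0)) := tendsto_const_nhds.sub hg
    rw [sub_zero] at h
    refine h.congr' ?_
    filter_upwards [hode] with s hs
    linarith
  have ha2 : (0:ℝ) < a ^ 2 / 16 := by positivity
  have hd2 : (0:ℝ) < d ^ 2 := by positivity
  rcases lt_trichotomy β (1 / 2) with hlt | heq | hgt
  · exfalso
    have hT0 : Tendsto (fun s => deriv ν s * (4 * deriv ν s - 1) * (s * deriv ν s - ν s)
        * s ^ (1 - 2 * β) * s ^ (2 * β - 1)) atTop
        (𝓝 (d * β * (4 * 0 - 1) * (d * β - d) * 0)) :=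
      hT.mul (tendsto_rpow_zero_of_neg (by linarith))
    rw [mul_zero] at hT0
    have hT0' : Tendsto (fun s => deriv ν s * (4 * deriv ν s - 1) * (s * deriv ν s - ν s))
        atTop (𝓝 0) := by
      refine hT0.congr' ?_
      filter_upwards [eventually_gt_atTop 0] with s hs
      rw [mul_assoc, ← Real.rpow_add hs, show (1 - 2 * β) + (2 * β - 1) = 0 by ring,
        Real.rpow_zero, mul_one]
    have := tendsto_nhds_unique hTa hT0'
    linarith
  · refine ⟨heq, ?_⟩
    subst heq
    have hT' : Tendsto (fun s => deriv ν s * (4 * deriv ν s - 1) * (s * deriv ν s - ν s))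
        atTop (𝓝 (d * (1 / 2) * (4 * 0 - 1) * (d * (1 / 2) - d))) := by
      refine hT.congr fun s => ?_
      rw [show (1 : ℝ) - 2 * (1 / 2) = 0 by ring, Real.rpow_zero, mul_one]
    have hEq := tendsto_nhds_unique hT' hTa
    have hfac : (d - a / 2) * (d + a / 2) = 0 := by nlinarith [hEq]
    rcases mul_eq_zero.mp hfac with h | h
    · left; linarith
    · right; linarith
  · exfalso
    have h0' : Tendsto (fun s => deriv ν s * (4 * deriv ν s - 1) * (s * deriv ν s - ν s)
        * s ^ (1 - 2 * β)) atTop (𝓝 (a ^ 2 / 16 * 0)) :=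
      hTa.mul (tendsto_rpow_zero_of_neg (by linarith))
    rw [mul_zero] at h0'
    have hEq := tendsto_nhds_unique hT h0'
    nlinarith [hEq, mul_pos (mul_pos hd2 hβ0) (by linarith : (0:ℝ) < 1 - β)]
end

section
/- If $M$ is the $2\times2$ matrix $\begin{pmatrix}\Omega_n-V & -a_n\Theta_n\\ a_n\Theta_{n-1} & -\Omega_n-V\end{pmatrix}$ and the recurrence relations $(\Omega_{n+1}-\Omega_n)(x-b_n)=W+a_{n+1}^2\Theta_{n+1}-a_n^2\Theta_{n-1}$ and $\Omega_{n+1}+\Omega_n=(x-b_n)\Theta_n$ hold, then at any zero $x_r$ of $W$, combining and telescoping these yields $\Omega_n(x_r)^2-V(x_r)^2=a_n^2\,\Theta_n(x_r)\Theta_{n-1}(x_r)$ for all $n\geq 1$, provided the identity holds at $n=1$ with $\Omega_0=0$, $\Theta_{-1}=0$ (so $\Omega_1(x_r)^2-V(x_r)^2=a_1^2\Theta_1(x_r)\Theta_0(x_r)$ is given or $V(x_r)^2=\Omega_1(x_r)^2-a_1^2\Theta_1(x_r)\Theta_0(x_r)$). -/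
/-- Inductive propagation of the quadratic invariant
`Ω_n² - V² = a_n² Θ_n Θ_{n-1}` at a zero `x_r` of `W`, from the two recurrence
relations for the coefficient functions. -/
theorem quadratic_invariant_propagation
    (V W : ℝ → ℝ) (Θ Ω : ℕ → ℝ → ℝ) (a b : ℕ → ℝ)
    (xr : ℝ) (hW : W xr = 0)
    (hrec1 : ∀ n, 1 ≤ n → ∀ x : ℝ,
      (Ω (n + 1) x - Ω n x) * (x - b n)
        = W x + a (n + 1) ^ 2 * Θ (n + 1) x - a n ^ 2 * Θ (n - 1) x)
    (hrec2 : ∀ n, 1 ≤ n → ∀ x : ℝ,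
      Ω (n + 1) x + Ω n x = (x - b n) * Θ n x)
    (hΩ0 : ∀ x, Ω 0 x = 0)
    (hbase : Ω 1 xr ^ 2 - V xr ^ 2 = a 1 ^ 2 * Θ 1 xr * Θ 0 xr) :
    ∀ n, 1 ≤ n → Ω n xr ^ 2 - V xr ^ 2 = a n ^ 2 * Θ n xr * Θ (n - 1) xr := by
  intro n hn
  induction n with
  | zero => omega
  | succ m ih =>
    rcases Nat.eq_or_lt_of_le hn with h1 | h1
    · simpa [← h1] using hbase
    · have hm : 1 ≤ m := by omega
      have ihm := ih hm
      have h1' := hrec1 m hm xr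
      have h2' := hrec2 m hm xr
      rw [hW] at h1'
      have key : (Ω (m+1) xr - Ω m xr) * (Ω (m+1) xr + Ω m xr)
          = (a (m+1) ^ 2 * Θ (m+1) xr - a m ^ 2 * Θ (m-1) xr) * Θ m xr := by
        rw [h2']
        calc (Ω (m+1) xr - Ω m xr) * ((xr - b m) * Θ m xr)
            = ((Ω (m+1) xr - Ω m xr) * (xr - b m)) * Θ m xr := by ring
          _ = (a (m+1) ^ 2 * Θ (m+1) xr - a m ^ 2 * Θ (m-1) xr) * Θ m xr := by
              rw [h1']; ring_nf
      have : Ω (m+1) xr ^ 2 - Ω m xr ^ 2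
          = a (m+1) ^ 2 * Θ (m+1) xr * Θ m xr - a m ^ 2 * Θ (m-1) xr * Θ m xr := by
        nlinarith [key]
      have hsub : m + 1 - 1 = m := rfl
      rw [hsub]
      nlinarith [ihm, this]
end
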